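/- arXiv:2107.10868 — 9 statements merged into one kernel-verified Lean document; each statement's English description precedes it below -/
import Mathlib

section
/- Consider Local GD on a block starting at iteration t_c with τ local steps and step size η > 0. Fix a device i and an iteration t with t_c ≤ t ≤ t_c + τ. If Q_i(W^{(i)}(t')) ≤ Q_i(W(t_c)) for every t' with t_c ≤ t' < t, then ‖W^{(i)}(t) − W(t_c)‖_F² ≤ (τ² + τ)·η²·(mn/d)·Q_i(W(t_c)). -/
open Finset

/-- Two-layer ReLU network: `f(W,v,x) = (1/√d) ∑_r v_r · max(⟨w_r, x⟩, 0)`. -/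
noncomputable def nnf {m d : ℕ} (W : Matrix (Fin m) (Fin d) ℝ)
    (v : Fin m → ℝ) (x : Fin d → ℝ) : ℝ :=
  (1 / Real.sqrt d) * ∑ r, v r * max (∑ j, W r j * x j) 0

/-- Formal gradient of the squared loss at one data point. -/
noncomputable def grad {m d : ℕ} (W : Matrix (Fin m) (Fin d) ℝ)
    (v : Fin m → ℝ) (x : Fin d → ℝ) (y : ℝ) : Matrix (Fin m) (Fin d) ℝ :=
  fun r j => (1 / Real.sqrt d) * (nnf W v x - y) * v r *
    (if 0 < ∑ k, W r k * x k then (1 : ℝ) else 0) * x j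

/-- Squared Frobenius norm. -/
noncomputable def frobSq {m d : ℕ} (A : Matrix (Fin m) (Fin d) ℝ) : ℝ :=
  ∑ r, ∑ j, (A r j) ^ 2

/-- Linear embedding of matrices into Euclidean space. -/
noncomputable def toE {m d : ℕ} :
    Matrix (Fin m) (Fin d) ℝ →ₗ[ℝ] EuclideanSpace ℝ (Fin m × Fin d) where
  toFun A := WithLp.toLp 2 (fun p : Fin m × Fin d => A p.1 p.2)
  map_add' _ _ := rfl
  map_smul' _ _ := rfl

lemma norm_toE {m d : ℕ} (A : Matrix (Fin m) (Fin d) ℝ) :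
    ‖toE A‖ = Real.sqrt (frobSq A) := by
  rw [EuclideanSpace.norm_eq]
  congr 1
  rw [frobSq, Fintype.sum_prod_type]
  simp [toE, sq_abs]
  rfl

lemma frobSq_nonneg {m d : ℕ} (A : Matrix (Fin m) (Fin d) ℝ) : 0 ≤ frobSq A := by
  unfold frobSq; positivity

lemma frobSq_eq {m d : ℕ} (A : Matrix (Fin m) (Fin d) ℝ) :
    frobSq A = ‖toE A‖ ^ 2 := by
  rw [norm_toE, Real.sq_sqrt (frobSq_nonneg A)]

lemma frobSq_grad_le {m d : ℕ} (hd : 0 < d) (W : Matrix (Fin m) (Fin d) ℝ)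
    (v : Fin m → ℝ) (hv : ∀ r, |v r| ≤ 1) (x : Fin d → ℝ)
    (hx : ∑ k, (x k) ^ 2 ≤ 1) (y : ℝ) :
    frobSq (grad W v x y) ≤ (m : ℝ) / d * (nnf W v x - y) ^ 2 := by
  have hd' : (0 : ℝ) < d := by exact_mod_cast hd
  have hsq : (1 / Real.sqrt d) ^ 2 = 1 / d := by
    rw [div_pow, Real.sq_sqrt hd'.le, one_pow]
  have step : ∀ r : Fin m, ∑ j, (grad W v x y r j) ^ 2
      ≤ 1 / d * (nnf W v x - y) ^ 2 := by
    intro r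
    have h1 : ∀ j, (grad W v x y r j) ^ 2
        ≤ 1 / d * (nnf W v x - y) ^ 2 * (x j) ^ 2 := by
      intro j
      have hv2 : (v r) ^ 2 ≤ 1 := by nlinarith [hv r, abs_nonneg (v r), sq_abs (v r)]
      have hind : (if 0 < ∑ k, W r k * x k then (1 : ℝ) else 0) ^ 2 ≤ 1 := by
        split <;> norm_num
      have : (grad W v x y r j) ^ 2 = (1 / Real.sqrt d) ^ 2 * (nnf W v x - y) ^ 2
          * (v r) ^ 2 * (if 0 < ∑ k, W r k * x k then (1 : ℝ) else 0) ^ 2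
          * (x j) ^ 2 := by
        unfold grad; ring
      rw [this, hsq]
      have hnn : (0 : ℝ) ≤ 1 / d * (nnf W v x - y) ^ 2 * (x j) ^ 2 := by positivity
      have ha : (v r) ^ 2 * (if 0 < ∑ k, W r k * x k then (1 : ℝ) else 0) ^ 2 ≤ 1 :=
        mul_le_one₀ hv2 (sq_nonneg _) hind
      calc 1 / d * (nnf W v x - y) ^ 2 * (v r) ^ 2
            * (if 0 < ∑ k, W r k * x k then (1 : ℝ) else 0) ^ 2 * (x j) ^ 2
          = (1 / d * (nnf W v x - y) ^ 2 * (x j) ^ 2)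
            * ((v r) ^ 2 * (if 0 < ∑ k, W r k * x k then (1 : ℝ) else 0) ^ 2) := by ring
        _ ≤ (1 / d * (nnf W v x - y) ^ 2 * (x j) ^ 2) * 1 :=
            mul_le_mul_of_nonneg_left ha hnn
        _ = 1 / d * (nnf W v x - y) ^ 2 * (x j) ^ 2 := by ring
    calc ∑ j, (grad W v x y r j) ^ 2
        ≤ ∑ j, 1 / d * (nnf W v x - y) ^ 2 * (x j) ^ 2 :=
          Finset.sum_le_sum fun j _ => h1 j
      _ = 1 / d * (nnf W v x - y) ^ 2 * ∑ j, (x j) ^ 2 := by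
          rw [Finset.mul_sum]
      _ ≤ 1 / d * (nnf W v x - y) ^ 2 * 1 :=
          mul_le_mul_of_nonneg_left hx (by positivity)
      _ = 1 / d * (nnf W v x - y) ^ 2 := by ring
  calc frobSq (grad W v x y) ≤ ∑ _r : Fin m, 1 / d * (nnf W v x - y) ^ 2 :=
        Finset.sum_le_sum fun r _ => step r
    _ = (m : ℝ) / d * (nnf W v x - y) ^ 2 := by
        rw [Finset.sum_const, card_univ, Fintype.card_fin, nsmul_eq_mul]; ring

theorem stmt3 (m d n K : ℕ) (hm : 0 < m) (hd : 0 < d) (hn : 0 < n) (hK : 0 < K)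
    (v : Fin m → ℝ) (hv : ∀ r, |v r| ≤ 1)
    (X : Fin K → Fin n → Fin d → ℝ) (Y : Fin K → Fin n → ℝ)
    (hX : ∀ i j, Real.sqrt (∑ k, (X i j k) ^ 2) ≤ 1)
    (τ : ℕ) (η : ℝ) (hη : 0 < η) (tc : ℕ)
    (W0 : Matrix (Fin m) (Fin d) ℝ) (Wloc : Fin K → ℕ → Matrix (Fin m) (Fin d) ℝ)
    (hinit : ∀ i, Wloc i tc = W0)
    (hupd : ∀ i, ∀ t, tc ≤ t → t < tc + τ →
      Wloc i (t + 1) = Wloc i t - η • (∑ j, grad (Wloc i t) v (X i j) (Y i j)))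
    (i : Fin K) (t : ℕ) (ht1 : tc ≤ t) (ht2 : t ≤ tc + τ)
    (hQ : ∀ t', tc ≤ t' → t' < t →
      ∑ j, (nnf (Wloc i t') v (X i j) - Y i j) ^ 2 ≤
        ∑ j, (nnf W0 v (X i j) - Y i j) ^ 2) :
    frobSq (Wloc i t - W0) ≤
      ((τ : ℝ) ^ 2 + τ) * η ^ 2 * ((m : ℝ) * n / d) *
        ∑ j, (nnf W0 v (X i j) - Y i j) ^ 2 := by
  set Q0 : ℝ := ∑ j, (nnf W0 v (X i j) - Y i j) ^ 2 with hQ0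
  have hQ0nn : 0 ≤ Q0 := by positivity
  have hd' : (0 : ℝ) < d := by exact_mod_cast hd
  set C : ℝ := Real.sqrt ((m : ℝ) / d) * Real.sqrt n * Real.sqrt Q0 with hC
  have hCnn : 0 ≤ C := by positivity
  have hx2 : ∀ j, ∑ k, (X i j k) ^ 2 ≤ 1 := by
    intro j
    have h := hX i j
    have hnn : (0 : ℝ) ≤ ∑ k, (X i j k) ^ 2 := by positivity
    nlinarith [Real.sq_sqrt hnn, Real.sqrt_nonneg (∑ k, (X i j k) ^ 2)]
  -- bound on the norm of the full gradient at any W with loss ≤ Q0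
  have gradB : ∀ W : Matrix (Fin m) (Fin d) ℝ,
      (∑ j, (nnf W v (X i j) - Y i j) ^ 2) ≤ Q0 →
      ‖toE (∑ j, grad W v (X i j) (Y i j))‖ ≤ C := by
    intro W hW
    have h1 : ∀ j : Fin n, ‖toE (grad W v (X i j) (Y i j))‖
        ≤ Real.sqrt ((m : ℝ) / d) * |nnf W v (X i j) - Y i j| := by
      intro j
      rw [norm_toE]
      calc Real.sqrt (frobSq (grad W v (X i j) (Y i j)))
          ≤ Real.sqrt ((m : ℝ) / d * (nnf W v (X i j) - Y i j) ^ 2) :=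
            Real.sqrt_le_sqrt (frobSq_grad_le hd W v hv (X i j) (hx2 j) (Y i j))
        _ = Real.sqrt ((m : ℝ) / d) * |nnf W v (X i j) - Y i j| := by
            rw [Real.sqrt_mul (by positivity), Real.sqrt_sq_eq_abs]
    have h2 : ∑ j, |nnf W v (X i j) - Y i j| ≤ Real.sqrt n * Real.sqrt Q0 := by
      have hcs : (∑ j, |nnf W v (X i j) - Y i j|) ^ 2
          ≤ (n : ℝ) * ∑ j, |nnf W v (X i j) - Y i j| ^ 2 := by
        have := sq_sum_le_card_mul_sum_sq
          (s := (univ : Finset (Fin n))) (f := fun j => |nnf W v (X i j) - Y i j|)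
        simpa using this
      have hsum : ∑ j, |nnf W v (X i j) - Y i j| ^ 2 ≤ Q0 := by
        simpa [sq_abs] using hW
      have hnn : (0 : ℝ) ≤ ∑ j, |nnf W v (X i j) - Y i j| :=
        Finset.sum_nonneg fun j _ => abs_nonneg _
      have h3 : (∑ j, |nnf W v (X i j) - Y i j|) ^ 2 ≤ (n : ℝ) * Q0 := by
        calc (∑ j, |nnf W v (X i j) - Y i j|) ^ 2
            ≤ (n : ℝ) * ∑ j, |nnf W v (X i j) - Y i j| ^ 2 := hcs
          _ ≤ (n : ℝ) * Q0 := by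
              apply mul_le_mul_of_nonneg_left hsum (by positivity)
      calc ∑ j, |nnf W v (X i j) - Y i j|
          = Real.sqrt ((∑ j, |nnf W v (X i j) - Y i j|) ^ 2) :=
            (Real.sqrt_sq hnn).symm
        _ ≤ Real.sqrt ((n : ℝ) * Q0) := Real.sqrt_le_sqrt h3
        _ = Real.sqrt n * Real.sqrt Q0 := Real.sqrt_mul (by positivity) _
    calc ‖toE (∑ j, grad W v (X i j) (Y i j))‖
        = ‖∑ j, toE (grad W v (X i j) (Y i j))‖ := by rw [map_sum]
      _ ≤ ∑ j, ‖toE (grad W v (X i j) (Y i j))‖ := norm_sum_le _ _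
      _ ≤ ∑ j, Real.sqrt ((m : ℝ) / d) * |nnf W v (X i j) - Y i j| :=
          Finset.sum_le_sum fun j _ => h1 j
      _ = Real.sqrt ((m : ℝ) / d) * ∑ j, |nnf W v (X i j) - Y i j| := by
          rw [Finset.mul_sum]
      _ ≤ Real.sqrt ((m : ℝ) / d) * (Real.sqrt n * Real.sqrt Q0) := by
          apply mul_le_mul_of_nonneg_left h2 (Real.sqrt_nonneg _)
      _ = C := by rw [hC]; ring
  -- induction: distance bound
  have key : ∀ s, tc ≤ s → s ≤ t →
      ‖toE (Wloc i s - W0)‖ ≤ η * ((s - tc : ℕ) : ℝ) * C := by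
    intro s hs
    induction s, hs using Nat.le_induction with
    | base =>
      intro _
      simp [hinit i, map_zero]
    | succ s hs ih =>
      intro hst
      have hslt : s < t := Nat.lt_of_succ_le hst
      have hstc : s < tc + τ := lt_of_lt_of_le hslt ht2
      have hW : Wloc i (s + 1) - W0
          = (Wloc i s - W0) - η • (∑ j, grad (Wloc i s) v (X i j) (Y i j)) := by
        rw [hupd i s hs hstc]; abel
      have hgb := gradB (Wloc i s) (hQ s hs hslt)
      have : ‖toE (Wloc i (s + 1) - W0)‖
          ≤ ‖toE (Wloc i s - W0)‖ + η * C := by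
        rw [hW, map_sub, map_smul]
        calc ‖toE (Wloc i s - W0) - η • toE (∑ j, grad (Wloc i s) v (X i j) (Y i j))‖
            ≤ ‖toE (Wloc i s - W0)‖ + ‖η • toE (∑ j, grad (Wloc i s) v (X i j) (Y i j))‖ :=
              norm_sub_le _ _
          _ ≤ ‖toE (Wloc i s - W0)‖ + η * C := by
              rw [norm_smul, Real.norm_eq_abs, abs_of_pos hη]
              exact add_le_add_right (mul_le_mul_of_nonneg_left hgb hη.le) _
      have hcast : ((s + 1 - tc : ℕ) : ℝ) = ((s - tc : ℕ) : ℝ) + 1 := by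
        rw [Nat.succ_sub hs]; push_cast; ring
      calc ‖toE (Wloc i (s + 1) - W0)‖
          ≤ ‖toE (Wloc i s - W0)‖ + η * C := this
        _ ≤ η * ((s - tc : ℕ) : ℝ) * C + η * C := by
            exact add_le_add_left (ih hslt.le) _
        _ = η * ((s + 1 - tc : ℕ) : ℝ) * C := by rw [hcast]; ring
  have hkey := key t ht1 le_rfl
  have htτ : ((t - tc : ℕ) : ℝ) ≤ (τ : ℝ) := by
    have : t - tc ≤ τ := by omega
    exact_mod_cast this
  have htnn : (0 : ℝ) ≤ ((t - tc : ℕ) : ℝ) := Nat.cast_nonneg _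
  have hC2 : C ^ 2 = (m : ℝ) / d * n * Q0 := by
    rw [hC, mul_pow, mul_pow, Real.sq_sqrt (by positivity), Real.sq_sqrt (by positivity),
      Real.sq_sqrt hQ0nn]
  rw [frobSq_eq]
  calc ‖toE (Wloc i t - W0)‖ ^ 2
      ≤ (η * ((t - tc : ℕ) : ℝ) * C) ^ 2 := by
        apply sq_le_sq' _ hkey
        nlinarith [norm_nonneg (toE (Wloc i t - W0))]
    _ = η ^ 2 * ((t - tc : ℕ) : ℝ) ^ 2 * ((m : ℝ) / d * n * Q0) := by
        rw [← hC2]; ring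
    _ ≤ η ^ 2 * (τ : ℝ) ^ 2 * ((m : ℝ) / d * n * Q0) := by
        apply mul_le_mul_of_nonneg_right _ (by positivity)
        have : ((t - tc : ℕ) : ℝ) ^ 2 ≤ (τ : ℝ) ^ 2 := by nlinarith
        nlinarith [sq_nonneg η]
    _ = (τ : ℝ) ^ 2 * (η ^ 2 * ((m : ℝ) * n / d) * Q0) := by ring
    _ ≤ ((τ : ℝ) ^ 2 + τ) * (η ^ 2 * ((m : ℝ) * n / d) * Q0) := by
        have h2 : (τ : ℝ) ^ 2 ≤ (τ : ℝ) ^ 2 + τ := by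
          have := Nat.cast_nonneg (α := ℝ) τ; linarith
        exact mul_le_mul_of_nonneg_right h2 (by positivity)
    _ = ((τ : ℝ) ^ 2 + τ) * η ^ 2 * ((m : ℝ) * n / d) * Q0 := by ring
end

section
/- Let W, W^{(1)}, …, W^{(K)} ∈ ℝ^{m×d} and let B ≥ 0 be such that ‖(D(W^{(i)},x) − D(W,x))·v‖₂² ≤ B for every device i and every input x appearing in the shard S_i. Then (1/K)·Σ_{i=1}^K ‖G_i(W^{(i)}) − G_i(W)‖_F² ≤ (2m²n²/d²)·(1/K)·Σ_{i=1}^K ‖W^{(i)} − W‖_F² + (2nB/d)·Q(W). -/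
open Finset

/-- `D(W,x)·v`: the vector with entries `1{⟨w_r,x⟩ > 0}·v_r`. -/
noncomputable def Dv {m d : ℕ} (W : Matrix (Fin m) (Fin d) ℝ)
    (v : Fin m → ℝ) (x : Fin d → ℝ) : Fin m → ℝ :=
  fun r => (if 0 < ∑ k, W r k * x k then (1 : ℝ) else 0) * v r

lemma invsq (d : ℕ) (hd : 0 < d) : (1 / Real.sqrt d) ^ 2 = 1 / d := by
  rw [div_pow, one_pow, Real.sq_sqrt (by positivity)]

-- per point bound
lemma point {m d : ℕ} (hd : 0 < d) (v : Fin m → ℝ) (hv : ∀ r, |v r| ≤ 1)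
    (x : Fin d → ℝ) (hx : ∑ k, x k ^ 2 ≤ 1)
    (W W' : Matrix (Fin m) (Fin d) ℝ) (y : ℝ) (B : ℝ) (hB : 0 ≤ B)
    (hDv : ∑ r, (Dv W' v x r - Dv W v x r) ^ 2 ≤ B) :
    frobSq (grad W' v x y - grad W v x y) ≤
      (2 * (m:ℝ)^2 / (d:ℝ)^2) * frobSq (W' - W) + (2 * B / d) * (nnf W v x - y)^2 := by
  set f' := nnf W' v x with hf'
  set f := nnf W v x with hf
  set a : Fin m → ℝ := Dv W' v x with ha
  set b : Fin m → ℝ := Dv W v x with hb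
  have hs0 : (0:ℝ) ≤ ∑ k, x k ^ 2 := by positivity
  -- entrywise formula
  have hentry : ∀ r c, (grad W' v x y - grad W v x y) r c
      = (1 / Real.sqrt d) * ((f' - y) * a r - (f - y) * b r) * x c := by
    intro r c
    simp only [Matrix.sub_apply, grad, ha, hb, Dv, hf, hf']
    ring
  have hfrob : frobSq (grad W' v x y - grad W v x y)
      = (1/(d:ℝ)) * (∑ r, ((f' - y) * a r - (f - y) * b r)^2) * (∑ c, x c ^ 2) := by
    have inner : ∀ r : Fin m, ∑ c, ((grad W' v x y - grad W v x y) r c)^2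
        = ((1/(d:ℝ)) * ((f' - y) * a r - (f - y) * b r)^2) * ∑ c, x c ^ 2 := by
      intro r
      rw [Finset.mul_sum]
      apply Finset.sum_congr rfl
      intro c _
      rw [hentry, mul_pow, mul_pow, invsq d hd]
    unfold frobSq
    simp_rw [inner]
    rw [← Finset.sum_mul, ← Finset.mul_sum]
  -- bound on sum of e^2
  have hasq : ∑ r, (a r)^2 ≤ (m:ℝ) := by
    calc ∑ r, (a r)^2 ≤ ∑ _r : Fin m, (1:ℝ) := by
          apply Finset.sum_le_sum
          intro r _
          have : |a r| ≤ 1 := by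
            simp only [ha, Dv, abs_mul]
            rcases le_or_gt (∑ k, W' r k * x k) 0 with h | h
            · simp [not_lt.2 h]
            · simpa [h] using hv r
          nlinarith [abs_nonneg (a r), sq_abs (a r)]
      _ = (m:ℝ) := by simp
  -- (f' - f)^2 ≤ (m/d) * frobSq (W' - W)
  have hdf : (f' - f)^2 ≤ ((m:ℝ)/d) * frobSq (W' - W) := by
    have hdiff : f' - f = (1 / Real.sqrt d) *
        ∑ r, v r * (max (∑ j, W' r j * x j) 0 - max (∑ j, W r j * x j) 0) := by
      simp only [hf', hf, nnf]
      rw [← mul_sub, ← Finset.sum_sub_distrib]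
      congr 1
      apply Finset.sum_congr rfl
      intro r _; ring
    have hCS : ∀ r : Fin m, (v r * (max (∑ j, W' r j * x j) 0 - max (∑ j, W r j * x j) 0))^2
        ≤ ∑ c, ((W' - W) r c)^2 := by
      intro r
      have h1 : |v r * (max (∑ j, W' r j * x j) 0 - max (∑ j, W r j * x j) 0)|
          ≤ |∑ j, W' r j * x j - ∑ j, W r j * x j| := by
        rw [abs_mul]
        calc |v r| * |max (∑ j, W' r j * x j) 0 - max (∑ j, W r j * x j) 0|
            ≤ 1 * |∑ j, W' r j * x j - ∑ j, W r j * x j| :=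
              mul_le_mul (hv r) (abs_max_sub_max_le_abs _ _ _) (abs_nonneg _) zero_le_one
          _ = _ := one_mul _
      have h2 : (∑ j, W' r j * x j - ∑ j, W r j * x j)^2 ≤ ∑ c, ((W' - W) r c)^2 := by
        have : ∑ j, W' r j * x j - ∑ j, W r j * x j = ∑ j, (W' - W) r j * x j := by
          rw [← Finset.sum_sub_distrib]
          apply Finset.sum_congr rfl
          intro j _; simp [Matrix.sub_apply]; ring
        rw [this]
        calc (∑ j, (W' - W) r j * x j)^2
            ≤ (∑ j, ((W' - W) r j)^2) * ∑ j, (x j)^2 :=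
              Finset.sum_mul_sq_le_sq_mul_sq _ _ _
          _ ≤ (∑ j, ((W' - W) r j)^2) * 1 := by
              apply mul_le_mul_of_nonneg_left hx (by positivity)
          _ = _ := mul_one _
      calc (v r * _)^2 = |v r * (max (∑ j, W' r j * x j) 0 - max (∑ j, W r j * x j) 0)|^2 :=
            (sq_abs _).symm
        _ ≤ |∑ j, W' r j * x j - ∑ j, W r j * x j|^2 := by
            apply pow_le_pow_left₀ (abs_nonneg _) h1
        _ = (∑ j, W' r j * x j - ∑ j, W r j * x j)^2 := sq_abs _
        _ ≤ _ := h2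
    rw [hdiff, mul_pow, invsq d hd]
    have hsum : (∑ r, v r * (max (∑ j, W' r j * x j) 0 - max (∑ j, W r j * x j) 0))^2
        ≤ (m:ℝ) * frobSq (W' - W) := by
      calc (∑ r, v r * (max (∑ j, W' r j * x j) 0 - max (∑ j, W r j * x j) 0))^2
          ≤ (Finset.univ.card : ℝ) * ∑ r, (v r * (max (∑ j, W' r j * x j) 0
              - max (∑ j, W r j * x j) 0))^2 := by
            exact_mod_cast sq_sum_le_card_mul_sum_sq
              (s := (Finset.univ : Finset (Fin m)))
              (f := fun r => v r * (max (∑ j, W' r j * x j) 0 - max (∑ j, W r j * x j) 0))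
        _ ≤ (m:ℝ) * frobSq (W' - W) := by
            rw [Finset.card_univ, Fintype.card_fin]
            apply mul_le_mul_of_nonneg_left _ (by positivity)
            unfold frobSq
            exact Finset.sum_le_sum fun r _ => hCS r
    calc (1/(d:ℝ)) * (∑ r, v r * (max (∑ j, W' r j * x j) 0 - max (∑ j, W r j * x j) 0))^2
        ≤ (1/(d:ℝ)) * ((m:ℝ) * frobSq (W' - W)) := by
          apply mul_le_mul_of_nonneg_left hsum (by positivity)
      _ = ((m:ℝ)/d) * frobSq (W' - W) := by ring
  -- bound E
  have hE : ∑ r, ((f' - y) * a r - (f - y) * b r)^2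
      ≤ 2 * (f' - f)^2 * (m:ℝ) + 2 * (f - y)^2 * B := by
    have step : ∀ r : Fin m, ((f' - y) * a r - (f - y) * b r)^2
        ≤ 2 * (f' - f)^2 * (a r)^2 + 2 * (f - y)^2 * (a r - b r)^2 := by
      intro r; nlinarith [sq_nonneg ((f' - f) * a r - (f - y) * (a r - b r))]
    calc ∑ r, ((f' - y) * a r - (f - y) * b r)^2
        ≤ ∑ r, (2 * (f' - f)^2 * (a r)^2 + 2 * (f - y)^2 * (a r - b r)^2) :=
          Finset.sum_le_sum fun r _ => step r
      _ = 2 * (f' - f)^2 * (∑ r, (a r)^2) + 2 * (f - y)^2 * (∑ r, (a r - b r)^2) := by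
          rw [Finset.sum_add_distrib, ← Finset.mul_sum, ← Finset.mul_sum]
      _ ≤ 2 * (f' - f)^2 * (m:ℝ) + 2 * (f - y)^2 * B := by
          have h1 := mul_le_mul_of_nonneg_left hasq (by positivity : (0:ℝ) ≤ 2 * (f' - f)^2)
          have h2 := mul_le_mul_of_nonneg_left hDv (by positivity : (0:ℝ) ≤ 2 * (f - y)^2)
          linarith
  have hEnn : (0:ℝ) ≤ ∑ r, ((f' - y) * a r - (f - y) * b r)^2 := by positivity
  rw [hfrob]
  calc (1/(d:ℝ)) * (∑ r, ((f' - y) * a r - (f - y) * b r)^2) * (∑ c, x c ^ 2)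
      ≤ (1/(d:ℝ)) * (∑ r, ((f' - y) * a r - (f - y) * b r)^2) * 1 := by
        apply mul_le_mul_of_nonneg_left hx (by positivity)
    _ = (1/(d:ℝ)) * (∑ r, ((f' - y) * a r - (f - y) * b r)^2) := mul_one _
    _ ≤ (1/(d:ℝ)) * (2 * (f' - f)^2 * (m:ℝ) + 2 * (f - y)^2 * B) := by
        apply mul_le_mul_of_nonneg_left hE (by positivity)
    _ ≤ (1/(d:ℝ)) * (2 * (((m:ℝ)/d) * frobSq (W' - W)) * (m:ℝ) + 2 * (f - y)^2 * B) := by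
        apply mul_le_mul_of_nonneg_left _ (by positivity)
        have h3 := mul_le_mul_of_nonneg_right (mul_le_mul_of_nonneg_left hdf
          (by norm_num : (0:ℝ) ≤ 2)) (by positivity : (0:ℝ) ≤ (m:ℝ))
        linarith
    _ = (2 * (m:ℝ)^2 / (d:ℝ)^2) * frobSq (W' - W) + (2 * B / d) * (f - y)^2 := by
        field_simp

lemma frobSq_sum_le {m d n : ℕ} (M : Fin n → Matrix (Fin m) (Fin d) ℝ) :
    frobSq (∑ j, M j) ≤ (n:ℝ) * ∑ j, frobSq (M j) := by
  unfold frobSq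
  have h : ∀ (r : Fin m) (c : Fin d), ((∑ j, M j) r c)^2 ≤ (n:ℝ) * ∑ j, (M j r c)^2 := by
    intro r c
    have : (∑ j, M j) r c = ∑ j, M j r c := by
      simp [Matrix.sum_apply]
    rw [this]
    have := sq_sum_le_card_mul_sum_sq (s := (Finset.univ : Finset (Fin n)))
      (f := fun j => M j r c)
    simpa using this
  calc ∑ r, ∑ c, ((∑ j, M j) r c)^2
      ≤ ∑ r, ∑ c, ((n:ℝ) * ∑ j, (M j r c)^2) :=
        Finset.sum_le_sum fun r _ => Finset.sum_le_sum fun c _ => h r c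
    _ = (n:ℝ) * ∑ j, ∑ r, ∑ c, (M j r c)^2 := by
        simp_rw [← Finset.mul_sum]
        congr 1
        conv_rhs => rw [Finset.sum_comm]
        apply Finset.sum_congr rfl
        intro r _
        exact Finset.sum_comm

lemma key {m d n : ℕ} (hd : 0 < d) (v : Fin m → ℝ) (hv : ∀ r, |v r| ≤ 1)
    (x : Fin n → Fin d → ℝ) (y : Fin n → ℝ) (hx : ∀ j, ∑ k, x j k ^ 2 ≤ 1)
    (W W' : Matrix (Fin m) (Fin d) ℝ) (B : ℝ) (hB : 0 ≤ B)
    (hDv : ∀ j, ∑ r, (Dv W' v (x j) r - Dv W v (x j) r) ^ 2 ≤ B) :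
    frobSq ((∑ j, grad W' v (x j) (y j)) - ∑ j, grad W v (x j) (y j)) ≤
      (2 * (m:ℝ)^2 * (n:ℝ)^2 / (d:ℝ)^2) * frobSq (W' - W) +
      (2 * (n:ℝ) * B / d) * ∑ j, (nnf W v (x j) - y j)^2 := by
  have hsub : (∑ j, grad W' v (x j) (y j)) - ∑ j, grad W v (x j) (y j)
      = ∑ j, (grad W' v (x j) (y j) - grad W v (x j) (y j)) := by
    rw [Finset.sum_sub_distrib]
  rw [hsub]
  calc frobSq (∑ j, (grad W' v (x j) (y j) - grad W v (x j) (y j)))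
      ≤ (n:ℝ) * ∑ j, frobSq (grad W' v (x j) (y j) - grad W v (x j) (y j)) :=
        frobSq_sum_le _
    _ ≤ (n:ℝ) * ∑ j, ((2 * (m:ℝ)^2 / (d:ℝ)^2) * frobSq (W' - W)
          + (2 * B / d) * (nnf W v (x j) - y j)^2) := by
        apply mul_le_mul_of_nonneg_left _ (by positivity)
        exact Finset.sum_le_sum fun j _ => point hd v hv (x j) (hx j) W W' (y j) B hB (hDv j)
    _ = (2 * (m:ℝ)^2 * (n:ℝ)^2 / (d:ℝ)^2) * frobSq (W' - W) +
        (2 * (n:ℝ) * B / d) * ∑ j, (nnf W v (x j) - y j)^2 := by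
        rw [Finset.sum_add_distrib, Finset.sum_const, ← Finset.mul_sum]
        simp [Finset.card_univ]
        ring

theorem stmt6 (m d n K : ℕ) (hm : 0 < m) (hd : 0 < d) (hn : 0 < n) (hK : 0 < K)
    (v : Fin m → ℝ) (hv : ∀ r, |v r| ≤ 1)
    (X : Fin K → Fin n → Fin d → ℝ) (Y : Fin K → Fin n → ℝ)
    (hX : ∀ i j, Real.sqrt (∑ k, (X i j k) ^ 2) ≤ 1)
    (W : Matrix (Fin m) (Fin d) ℝ) (Wl : Fin K → Matrix (Fin m) (Fin d) ℝ)
    (B : ℝ) (hB : 0 ≤ B)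
    (hD : ∀ i j, ∑ r, (Dv (Wl i) v (X i j) r - Dv W v (X i j) r) ^ 2 ≤ B) :
    (1 / (K : ℝ)) * ∑ i, frobSq
        ((∑ j, grad (Wl i) v (X i j) (Y i j)) - (∑ j, grad W v (X i j) (Y i j))) ≤
      (2 * (m : ℝ) ^ 2 * n ^ 2 / d ^ 2) * ((1 / (K : ℝ)) * ∑ i, frobSq (Wl i - W)) +
      (2 * (n : ℝ) * B / d) *
        ((1 / (K : ℝ)) * ∑ i, ∑ j, (nnf W v (X i j) - Y i j) ^ 2) := by
  have hx : ∀ i j, ∑ k, (X i j k) ^ 2 ≤ 1 := by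
    intro i j
    have h0 : (0:ℝ) ≤ ∑ k, (X i j k) ^ 2 := by positivity
    nlinarith [Real.sq_sqrt h0, Real.sqrt_nonneg (∑ k, (X i j k) ^ 2), hX i j]
  have hkey : ∀ i, frobSq ((∑ j, grad (Wl i) v (X i j) (Y i j))
        - ∑ j, grad W v (X i j) (Y i j)) ≤
      (2 * (m:ℝ)^2 * (n:ℝ)^2 / (d:ℝ)^2) * frobSq (Wl i - W) +
      (2 * (n:ℝ) * B / d) * ∑ j, (nnf W v (X i j) - Y i j)^2 :=
    fun i => key hd v hv (X i) (Y i) (hx i) W (Wl i) B hB (hD i)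
  calc (1 / (K : ℝ)) * ∑ i, frobSq
        ((∑ j, grad (Wl i) v (X i j) (Y i j)) - (∑ j, grad W v (X i j) (Y i j)))
      ≤ (1 / (K : ℝ)) * ∑ i, ((2 * (m:ℝ)^2 * (n:ℝ)^2 / (d:ℝ)^2) * frobSq (Wl i - W) +
          (2 * (n:ℝ) * B / d) * ∑ j, (nnf W v (X i j) - Y i j)^2) := by
        apply mul_le_mul_of_nonneg_left _ (by positivity)
        exact Finset.sum_le_sum fun i _ => hkey i
    _ = (2 * (m : ℝ) ^ 2 * n ^ 2 / d ^ 2) * ((1 / (K : ℝ)) * ∑ i, frobSq (Wl i - W)) +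
        (2 * (n : ℝ) * B / d) *
          ((1 / (K : ℝ)) * ∑ i, ∑ j, (nnf W v (X i j) - Y i j) ^ 2) := by
        rw [Finset.sum_add_distrib, ← Finset.mul_sum, ← Finset.mul_sum]
        ring
end

section
/- For any matrices W, W^{(1)}, …, W^{(K)} ∈ ℝ^{m×d}, the average second moment of the n-rescaled per-example gradients satisfies (1/K²)·Σ_{i=1}^K (1/n)·Σ_{(x,y)∈S_i} ‖n·g(W^{(i)};x,y)‖_F² ≤ (2m²n²/d²)·(1/K²)·Σ_{i=1}^K ‖W^{(i)} − W‖_F² + (2mn/(dK))·Q(W). -/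
open Finset

lemma invsqrt_sq {d : ℕ} (hd : 0 < d) : (1 / Real.sqrt d) ^ 2 = 1 / d := by
  rw [div_pow, one_pow, Real.sq_sqrt (by positivity)]

lemma gradBound {m d : ℕ} (hd : 0 < d) (W' : Matrix (Fin m) (Fin d) ℝ)
    (v : Fin m → ℝ) (hv : ∀ r, |v r| ≤ 1) (x : Fin d → ℝ)
    (hx : ∑ k, x k ^ 2 ≤ 1) (y : ℝ) :
    frobSq (grad W' v x y) ≤ (m / d) * (nnf W' v x - y) ^ 2 := by
  have hx0 : (0:ℝ) ≤ ∑ k, x k ^ 2 := Finset.sum_nonneg fun _ _ => sq_nonneg _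
  have key : frobSq (grad W' v x y)
      = (1 / d) * (nnf W' v x - y) ^ 2 *
        ∑ r, (v r * (if 0 < ∑ k, W' r k * x k then (1:ℝ) else 0)) ^ 2 * ∑ j, x j ^ 2 := by
    unfold frobSq grad
    simp only [Finset.mul_sum]
    refine Finset.sum_congr rfl fun r _ => Finset.sum_congr rfl fun j _ => ?_
    rw [← invsqrt_sq (d := d) hd]
    ring
  rw [key]
  have hbd : ∀ r : Fin m,
      (v r * (if 0 < ∑ k, W' r k * x k then (1:ℝ) else 0)) ^ 2 * ∑ j, x j ^ 2 ≤ 1 := by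
    intro r
    have h1 : (v r * (if 0 < ∑ k, W' r k * x k then (1:ℝ) else 0)) ^ 2 ≤ 1 := by
      have := hv r
      split <;> nlinarith [abs_nonneg (v r), sq_abs (v r)]
    nlinarith [sq_nonneg (v r * (if 0 < ∑ k, W' r k * x k then (1:ℝ) else 0))]
  calc (1 / (d:ℝ)) * (nnf W' v x - y) ^ 2 *
        ∑ r, (v r * (if 0 < ∑ k, W' r k * x k then (1:ℝ) else 0)) ^ 2 * ∑ j, x j ^ 2
      ≤ (1 / (d:ℝ)) * (nnf W' v x - y) ^ 2 * ∑ _r : Fin m, (1:ℝ) := by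
        apply mul_le_mul_of_nonneg_left (Finset.sum_le_sum fun r _ => hbd r) (by positivity)
    _ = (m / d) * (nnf W' v x - y) ^ 2 := by
        simp [Finset.card_univ]; ring

lemma nnfDiff {m d : ℕ} (hd : 0 < d) (W W' : Matrix (Fin m) (Fin d) ℝ)
    (v : Fin m → ℝ) (hv : ∀ r, |v r| ≤ 1) (x : Fin d → ℝ)
    (hx : ∑ k, x k ^ 2 ≤ 1) :
    (nnf W' v x - nnf W v x) ^ 2 ≤ (m / d) * frobSq (W' - W) := by
  have h1 : nnf W' v x - nnf W v x
      = (1 / Real.sqrt d) * ∑ r, v r * (max (∑ j, W' r j * x j) 0 - max (∑ j, W r j * x j) 0) := by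
    unfold nnf
    rw [← mul_sub, ← Finset.sum_sub_distrib]
    congr 1
    exact Finset.sum_congr rfl fun r _ => by ring
  rw [h1, mul_pow, invsqrt_sq hd]
  have h2 : (∑ r, v r * (max (∑ j, W' r j * x j) 0 - max (∑ j, W r j * x j) 0)) ^ 2
      ≤ (m:ℝ) * ∑ r, (v r * (max (∑ j, W' r j * x j) 0 - max (∑ j, W r j * x j) 0)) ^ 2 := by
    simpa [Finset.card_univ] using
      sq_sum_le_card_mul_sum_sq (s := (Finset.univ : Finset (Fin m)))
        (f := fun r => v r * (max (∑ j, W' r j * x j) 0 - max (∑ j, W r j * x j) 0))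
  have h3 : ∀ r : Fin m,
      (v r * (max (∑ j, W' r j * x j) 0 - max (∑ j, W r j * x j) 0)) ^ 2
        ≤ ∑ j, (W' r j - W r j) ^ 2 := by
    intro r
    have ha : |max (∑ j, W' r j * x j) 0 - max (∑ j, W r j * x j) 0|
        ≤ |(∑ j, W' r j * x j) - ∑ j, W r j * x j| :=
      abs_max_sub_max_le_abs _ _ _
    have hb : (max (∑ j, W' r j * x j) 0 - max (∑ j, W r j * x j) 0) ^ 2
        ≤ ((∑ j, W' r j * x j) - ∑ j, W r j * x j) ^ 2 := by
      rw [← sq_abs (max _ _ - _), ← sq_abs ((∑ j, W' r j * x j) - _)]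
      exact pow_le_pow_left₀ (abs_nonneg _) ha 2
    have hc : (∑ j, W' r j * x j) - ∑ j, W r j * x j = ∑ j, (W' r j - W r j) * x j := by
      rw [← Finset.sum_sub_distrib]; exact Finset.sum_congr rfl fun j _ => by ring
    have hcs : (∑ j, (W' r j - W r j) * x j) ^ 2
        ≤ (∑ j, (W' r j - W r j) ^ 2) * ∑ j, x j ^ 2 :=
      Finset.sum_mul_sq_le_sq_mul_sq _ _ _
    have hD : (0:ℝ) ≤ ∑ j, (W' r j - W r j) ^ 2 :=
      Finset.sum_nonneg fun _ _ => sq_nonneg _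
    have hv2 : (v r) ^ 2 ≤ 1 := by
      have := hv r; nlinarith [abs_nonneg (v r), sq_abs (v r)]
    calc (v r * (max (∑ j, W' r j * x j) 0 - max (∑ j, W r j * x j) 0)) ^ 2
        = (v r) ^ 2 * (max (∑ j, W' r j * x j) 0 - max (∑ j, W r j * x j) 0) ^ 2 := by ring
      _ ≤ 1 * ((∑ j, W' r j * x j) - ∑ j, W r j * x j) ^ 2 := by
          apply mul_le_mul hv2 hb (sq_nonneg _) zero_le_one
      _ = (∑ j, (W' r j - W r j) * x j) ^ 2 := by rw [one_mul, hc]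
      _ ≤ (∑ j, (W' r j - W r j) ^ 2) * ∑ j, x j ^ 2 := hcs
      _ ≤ ∑ j, (W' r j - W r j) ^ 2 := by nlinarith
  have h4 : ∑ r, (v r * (max (∑ j, W' r j * x j) 0 - max (∑ j, W r j * x j) 0)) ^ 2
      ≤ frobSq (W' - W) := by
    unfold frobSq
    refine Finset.sum_le_sum fun r _ => ?_
    simpa [Matrix.sub_apply] using h3 r
  have hfnn : (0:ℝ) ≤ frobSq (W' - W) :=
    Finset.sum_nonneg fun _ _ => Finset.sum_nonneg fun _ _ => sq_nonneg _
  have hd' : (0:ℝ) < d := by exact_mod_cast hd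
  calc (1 / (d:ℝ)) * (∑ r, v r * (max (∑ j, W' r j * x j) 0 - max (∑ j, W r j * x j) 0)) ^ 2
      ≤ (1 / (d:ℝ)) * ((m:ℝ) * frobSq (W' - W)) := by
        apply mul_le_mul_of_nonneg_left _ (by positivity)
        exact h2.trans (by nlinarith [h4])
    _ = (m / d) * frobSq (W' - W) := by ring

lemma perPoint {m d n : ℕ} (hd : 0 < d) (W W' : Matrix (Fin m) (Fin d) ℝ)
    (v : Fin m → ℝ) (hv : ∀ r, |v r| ≤ 1) (x : Fin d → ℝ)
    (hx : Real.sqrt (∑ k, x k ^ 2) ≤ 1) (y : ℝ) :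
    frobSq ((n : ℝ) • grad W' v x y) ≤
      2 * (m:ℝ) ^ 2 * n ^ 2 / d ^ 2 * frobSq (W' - W)
        + 2 * (m:ℝ) * n ^ 2 / d * (nnf W v x - y) ^ 2 := by
  have hx0 : (0:ℝ) ≤ ∑ k, x k ^ 2 := Finset.sum_nonneg fun _ _ => sq_nonneg _
  have hx' : ∑ k, x k ^ 2 ≤ 1 := by
    nlinarith [Real.sq_sqrt hx0, Real.sqrt_nonneg (∑ k, x k ^ 2)]
  have hd' : (0:ℝ) < d := by exact_mod_cast hd
  have hsmul : frobSq ((n : ℝ) • grad W' v x y) = (n:ℝ) ^ 2 * frobSq (grad W' v x y) := by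
    unfold frobSq
    simp [Matrix.smul_apply, smul_eq_mul, mul_pow, Finset.mul_sum]
  have g1 := gradBound hd W' v hv x hx' y
  have g2 := nnfDiff hd W W' v hv x hx'
  have hfnn : (0:ℝ) ≤ frobSq (W' - W) :=
    Finset.sum_nonneg fun _ _ => Finset.sum_nonneg fun _ _ => sq_nonneg _
  calc frobSq ((n : ℝ) • grad W' v x y)
      = (n:ℝ) ^ 2 * frobSq (grad W' v x y) := hsmul
    _ ≤ (n:ℝ) ^ 2 * ((m / d) * (nnf W' v x - y) ^ 2) :=
        mul_le_mul_of_nonneg_left g1 (by positivity)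
    _ ≤ (n:ℝ) ^ 2 * ((m / d) *
          (2 * ((m / d) * frobSq (W' - W)) + 2 * (nnf W v x - y) ^ 2)) := by
        refine mul_le_mul_of_nonneg_left (mul_le_mul_of_nonneg_left ?_ (by positivity))
          (by positivity)
        nlinarith [g2, sq_nonneg ((nnf W' v x - nnf W v x) - (nnf W v x - y))]
    _ = 2 * (m:ℝ) ^ 2 * n ^ 2 / d ^ 2 * frobSq (W' - W)
          + 2 * (m:ℝ) * n ^ 2 / d * (nnf W v x - y) ^ 2 := by
        field_simp

theorem stmt7 (m d n K : ℕ) (hm : 0 < m) (hd : 0 < d) (hn : 0 < n) (hK : 0 < K)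
    (v : Fin m → ℝ) (hv : ∀ r, |v r| ≤ 1)
    (X : Fin K → Fin n → Fin d → ℝ) (Y : Fin K → Fin n → ℝ)
    (hX : ∀ i j, Real.sqrt (∑ k, (X i j k) ^ 2) ≤ 1)
    (W : Matrix (Fin m) (Fin d) ℝ) (Wl : Fin K → Matrix (Fin m) (Fin d) ℝ) :
    (1 / (K : ℝ) ^ 2) * ∑ i, (1 / (n : ℝ)) *
        ∑ j, frobSq ((n : ℝ) • grad (Wl i) v (X i j) (Y i j)) ≤
      (2 * (m : ℝ) ^ 2 * n ^ 2 / d ^ 2) * ((1 / (K : ℝ) ^ 2) * ∑ i, frobSq (Wl i - W)) +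
      (2 * (m : ℝ) * n / (d * K)) *
        ((1 / (K : ℝ)) * ∑ i, ∑ j, (nnf W v (X i j) - Y i j) ^ 2) := by
  have hn' : (0:ℝ) < n := by exact_mod_cast hn
  have hK' : (0:ℝ) < K := by exact_mod_cast hK
  have hd' : (0:ℝ) < d := by exact_mod_cast hd
  have hi : ∀ i : Fin K, (1 / (n : ℝ)) * ∑ j, frobSq ((n : ℝ) • grad (Wl i) v (X i j) (Y i j))
      ≤ 2 * (m:ℝ) ^ 2 * n ^ 2 / d ^ 2 * frobSq (Wl i - W)
        + 2 * (m:ℝ) * n / d * ∑ j, (nnf W v (X i j) - Y i j) ^ 2 := by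
    intro i
    have hs : ∑ j, frobSq ((n : ℝ) • grad (Wl i) v (X i j) (Y i j))
        ≤ ∑ j : Fin n, (2 * (m:ℝ) ^ 2 * n ^ 2 / d ^ 2 * frobSq (Wl i - W)
            + 2 * (m:ℝ) * n ^ 2 / d * (nnf W v (X i j) - Y i j) ^ 2) :=
      Finset.sum_le_sum fun j _ => perPoint hd W (Wl i) v hv (X i j) (hX i j) (Y i j)
    calc (1 / (n : ℝ)) * ∑ j, frobSq ((n : ℝ) • grad (Wl i) v (X i j) (Y i j))
        ≤ (1 / (n : ℝ)) * ∑ j : Fin n, (2 * (m:ℝ) ^ 2 * n ^ 2 / d ^ 2 * frobSq (Wl i - W)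
            + 2 * (m:ℝ) * n ^ 2 / d * (nnf W v (X i j) - Y i j) ^ 2) :=
          mul_le_mul_of_nonneg_left hs (by positivity)
      _ = 2 * (m:ℝ) ^ 2 * n ^ 2 / d ^ 2 * frobSq (Wl i - W)
            + 2 * (m:ℝ) * n / d * ∑ j, (nnf W v (X i j) - Y i j) ^ 2 := by
          rw [Finset.sum_add_distrib, Finset.sum_const, ← Finset.mul_sum,
            Finset.card_univ, Fintype.card_fin, nsmul_eq_mul]
          field_simp
  calc (1 / (K : ℝ) ^ 2) * ∑ i, (1 / (n : ℝ)) *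
        ∑ j, frobSq ((n : ℝ) • grad (Wl i) v (X i j) (Y i j))
      ≤ (1 / (K : ℝ) ^ 2) * ∑ i : Fin K,
          (2 * (m:ℝ) ^ 2 * n ^ 2 / d ^ 2 * frobSq (Wl i - W)
            + 2 * (m:ℝ) * n / d * ∑ j, (nnf W v (X i j) - Y i j) ^ 2) :=
        mul_le_mul_of_nonneg_left (Finset.sum_le_sum fun i _ => hi i) (by positivity)
    _ = (2 * (m : ℝ) ^ 2 * n ^ 2 / d ^ 2) * ((1 / (K : ℝ) ^ 2) * ∑ i, frobSq (Wl i - W)) +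
        (2 * (m : ℝ) * n / (d * K)) *
          ((1 / (K : ℝ)) * ∑ i, ∑ j, (nnf W v (X i j) - Y i j) ^ 2) := by
        rw [Finset.sum_add_distrib, ← Finset.mul_sum, ← Finset.mul_sum]
        field_simp
end

section
/- Let W, W^{(1)}, …, W^{(K)} ∈ ℝ^{m×d}, for each device i pick a point (x̃_i, ỹ_i) ∈ S_i, and let B ≥ 0 be such that ‖(D(W^{(i)},x̃_i) − D(W,x̃_i))·v‖₂² ≤ B for every i. Then (1/K)·Σ_{i=1}^K ‖n·g(W^{(i)};x̃_i,ỹ_i) − n·g(W;x̃_i,ỹ_i)‖_F² ≤ (2m²n²/d²)·(1/K)·Σ_{i=1}^K ‖W^{(i)} − W‖_F² + (2n²B/d)·Q(W). -/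
open Finset

private lemma key_lemma (m d n : ℕ) (hd : 0 < d)
    (v : Fin m → ℝ) (hv : ∀ r, |v r| ≤ 1)
    (x : Fin d → ℝ) (hx : ∑ j, x j ^ 2 ≤ 1) (y : ℝ)
    (W W' : Matrix (Fin m) (Fin d) ℝ)
    (B : ℝ) (hDB : ∑ r, (Dv W' v x r - Dv W v x r) ^ 2 ≤ B) :
    frobSq ((n : ℝ) • grad W' v x y - (n : ℝ) • grad W v x y) ≤
      (2 * (m : ℝ) ^ 2 * n ^ 2 / d ^ 2) * frobSq (W' - W) +
      (2 * (n : ℝ) ^ 2 * B / d) * (nnf W v x - y) ^ 2 := by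
  have hd' : (0:ℝ) < d := by exact_mod_cast hd
  have hc2 : (1 / Real.sqrt d) ^ 2 = 1 / d := by
    rw [div_pow, one_pow, Real.sq_sqrt hd'.le]
  set f' := nnf W' v x with hf'
  set f := nnf W v x with hf
  set a : Fin m → ℝ := fun r => (f' - y) * Dv W' v x r - (f - y) * Dv W v x r with ha
  have hsx : (0:ℝ) ≤ ∑ j, x j ^ 2 := Finset.sum_nonneg fun j _ => sq_nonneg _
  have hA : (0:ℝ) ≤ ∑ r, (a r) ^ 2 := Finset.sum_nonneg fun r _ => sq_nonneg _
  have hBnn : (0:ℝ) ≤ B :=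
    le_trans (Finset.sum_nonneg fun r _ => sq_nonneg _) hDB
  -- Step 1: exact expression for the Frobenius norm of the difference
  have hM : ∀ r j, ((n : ℝ) • grad W' v x y - (n : ℝ) • grad W v x y) r j
      = ((n : ℝ) * (1 / Real.sqrt d)) * a r * x j := by
    intro r j
    simp only [Matrix.sub_apply, Matrix.smul_apply, smul_eq_mul, grad, ha, Dv, ← hf', ← hf]
    ring
  have hfrob : frobSq ((n : ℝ) • grad W' v x y - (n : ℝ) • grad W v x y)
      = (n:ℝ)^2 * (1/d) * ((∑ r, (a r)^2) * (∑ j, x j ^ 2)) := by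
    simp only [frobSq]
    calc ∑ r, ∑ j, (((n : ℝ) • grad W' v x y - (n : ℝ) • grad W v x y) r j)^2
        = ∑ r, ∑ j, ((n : ℝ) * (1 / Real.sqrt d))^2 * (a r)^2 * (x j)^2 := by
          refine Finset.sum_congr rfl fun r _ => Finset.sum_congr rfl fun j _ => ?_
          rw [hM]; ring
      _ = ∑ r, (((n : ℝ) * (1 / Real.sqrt d))^2 * (a r)^2 * ∑ j, (x j)^2) := by
          exact Finset.sum_congr rfl fun r _ => (Finset.mul_sum _ _ _).symm
      _ = (n:ℝ)^2 * (1/d) * ((∑ r, (a r)^2) * (∑ j, x j ^ 2)) := by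
          rw [← Finset.sum_mul, ← Finset.mul_sum, mul_pow, hc2]; ring
  -- Step 2: bound on ∑ a r ^ 2
  have hsum_a : ∑ r, (a r)^2 ≤ 2 * m * (f' - f)^2 + 2 * (f - y)^2 * B := by
    have h1 : ∀ r, (a r)^2 ≤ 2 * (f' - f)^2 * (Dv W' v x r)^2
        + 2 * (f - y)^2 * (Dv W' v x r - Dv W v x r)^2 := by
      intro r
      have he : a r = (f' - f) * Dv W' v x r + (f - y) * (Dv W' v x r - Dv W v x r) := by
        simp only [ha]; ring
      rw [he]
      nlinarith [sq_nonneg ((f' - f) * Dv W' v x r - (f - y) * (Dv W' v x r - Dv W v x r))]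
    have hDv1 : ∀ r, (Dv W' v x r)^2 ≤ 1 := by
      intro r
      have hvr := hv r
      have hv2 : (v r)^2 ≤ 1 := by nlinarith [abs_nonneg (v r), sq_abs (v r)]
      simp only [Dv]
      split
      · simpa using hv2
      · simp
    calc ∑ r, (a r)^2
        ≤ ∑ r, (2 * (f' - f)^2 * (Dv W' v x r)^2
          + 2 * (f - y)^2 * (Dv W' v x r - Dv W v x r)^2) :=
          Finset.sum_le_sum fun r _ => h1 r
      _ = 2 * (f' - f)^2 * (∑ r, (Dv W' v x r)^2)
          + 2 * (f - y)^2 * (∑ r, (Dv W' v x r - Dv W v x r)^2) := by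
          rw [Finset.sum_add_distrib, ← Finset.mul_sum, ← Finset.mul_sum]
      _ ≤ 2 * (f' - f)^2 * m + 2 * (f - y)^2 * B := by
          have h2 : (∑ r, (Dv W' v x r)^2) ≤ (m:ℝ) := by
            calc ∑ r, (Dv W' v x r)^2 ≤ ∑ _r : Fin m, (1:ℝ) :=
                Finset.sum_le_sum fun r _ => hDv1 r
              _ = m := by simp
          gcongr
      _ = 2 * m * (f' - f)^2 + 2 * (f - y)^2 * B := by ring
  -- Step 3: Lipschitz bound on f' - f
  have hFnn : (0:ℝ) ≤ frobSq (W' - W) :=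
    Finset.sum_nonneg fun r _ => Finset.sum_nonneg fun j _ => sq_nonneg _
  have hFrw : frobSq (W' - W) = ∑ r, ∑ j, (W' r j - W r j)^2 := by
    simp [frobSq, Matrix.sub_apply]
  have hff : (f' - f)^2 ≤ (m:ℝ)/d * frobSq (W' - W) := by
    set q : Fin m → ℝ := fun r => ∑ j, (W' r j - W r j)^2 with hq
    have hqnn : ∀ r, (0:ℝ) ≤ q r := fun r => Finset.sum_nonneg fun j _ => sq_nonneg _
    have habs : |f' - f| ≤ (1 / Real.sqrt d) * ∑ r, Real.sqrt (q r) := by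
      have h0 : f' - f = (1 / Real.sqrt d) * ∑ r, (v r * max (∑ j, W' r j * x j) 0
          - v r * max (∑ j, W r j * x j) 0) := by
        rw [hf', hf]
        simp only [nnf, Finset.sum_sub_distrib]
        ring
      rw [h0, abs_mul]
      have hcnn : (0:ℝ) ≤ 1 / Real.sqrt d := by positivity
      rw [abs_of_nonneg hcnn]
      refine mul_le_mul_of_nonneg_left ?_ hcnn
      refine le_trans (Finset.abs_sum_le_sum_abs _ _) (Finset.sum_le_sum fun r _ => ?_)
      rw [← mul_sub, abs_mul]
      have hmax : |max (∑ j, W' r j * x j) 0 - max (∑ j, W r j * x j) 0|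
          ≤ |∑ j, W' r j * x j - ∑ j, W r j * x j| := abs_max_sub_max_le_abs _ _ _
      have hip : |∑ j, W' r j * x j - ∑ j, W r j * x j| ≤ Real.sqrt (q r) := by
        rw [← Finset.sum_sub_distrib]
        have : ∑ j, (W' r j * x j - W r j * x j) = ∑ j, (W' r j - W r j) * x j := by
          exact Finset.sum_congr rfl fun j _ => by ring
        rw [this]
        have hcs := Finset.sum_mul_sq_le_sq_mul_sq Finset.univ
          (fun j => W' r j - W r j) x
        have hsq : (∑ j, (W' r j - W r j) * x j)^2 ≤ q r := by
          refine le_trans hcs ?_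
          calc q r * (∑ j, x j ^ 2) ≤ q r * 1 := by
                exact mul_le_mul_of_nonneg_left hx (hqnn r)
            _ = q r := mul_one _
        calc |∑ j, (W' r j - W r j) * x j|
            = Real.sqrt ((∑ j, (W' r j - W r j) * x j)^2) := (Real.sqrt_sq_eq_abs _).symm
          _ ≤ Real.sqrt (q r) := Real.sqrt_le_sqrt hsq
      calc |v r| * |max (∑ j, W' r j * x j) 0 - max (∑ j, W r j * x j) 0|
          ≤ 1 * Real.sqrt (q r) := by
            exact mul_le_mul (hv r) (le_trans hmax hip) (abs_nonneg _) zero_le_one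
        _ = Real.sqrt (q r) := one_mul _
    have hT : (∑ r, Real.sqrt (q r))^2 ≤ m * frobSq (W' - W) := by
      calc (∑ r, Real.sqrt (q r))^2
          ≤ (Finset.univ : Finset (Fin m)).card * ∑ r, (Real.sqrt (q r))^2 :=
            sq_sum_le_card_mul_sum_sq
        _ = m * ∑ r, q r := by
            rw [Finset.card_univ, Fintype.card_fin]
            congr 1
            exact Finset.sum_congr rfl fun r _ => Real.sq_sqrt (hqnn r)
        _ = m * frobSq (W' - W) := by rw [hFrw]
    have hTnn : (0:ℝ) ≤ ∑ r, Real.sqrt (q r) :=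
      Finset.sum_nonneg fun r _ => Real.sqrt_nonneg _
    have h1 : (f' - f)^2 ≤ ((1 / Real.sqrt d) * ∑ r, Real.sqrt (q r))^2 := by
      rw [← sq_abs (f' - f)]
      exact pow_le_pow_left₀ (abs_nonneg _) habs 2
    calc (f' - f)^2 ≤ ((1 / Real.sqrt d) * ∑ r, Real.sqrt (q r))^2 := h1
      _ = (1/d) * (∑ r, Real.sqrt (q r))^2 := by rw [mul_pow, hc2]
      _ ≤ (1/d) * (m * frobSq (W' - W)) := by
          exact mul_le_mul_of_nonneg_left hT (by positivity)
      _ = (m:ℝ)/d * frobSq (W' - W) := by ring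
  -- Combine
  rw [hfrob]
  calc (n:ℝ)^2 * (1/d) * ((∑ r, (a r)^2) * (∑ j, x j ^ 2))
      ≤ (n:ℝ)^2 * (1/d) * ((∑ r, (a r)^2) * 1) := by gcongr
    _ = (n:ℝ)^2 * (1/d) * (∑ r, (a r)^2) := by ring
    _ ≤ (n:ℝ)^2 * (1/d) * (2 * m * (f' - f)^2 + 2 * (f - y)^2 * B) := by
        gcongr
    _ ≤ (n:ℝ)^2 * (1/d) * (2 * m * ((m:ℝ)/d * frobSq (W' - W)) + 2 * (f - y)^2 * B) := by
        gcongr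
    _ = (2 * (m : ℝ) ^ 2 * n ^ 2 / d ^ 2) * frobSq (W' - W) +
        (2 * (n : ℝ) ^ 2 * B / d) * (f - y) ^ 2 := by
        field_simp

theorem stmt8 (m d n K : ℕ) (hm : 0 < m) (hd : 0 < d) (hn : 0 < n) (hK : 0 < K)
    (v : Fin m → ℝ) (hv : ∀ r, |v r| ≤ 1)
    (X : Fin K → Fin n → Fin d → ℝ) (Y : Fin K → Fin n → ℝ)
    (hX : ∀ i j, Real.sqrt (∑ k, (X i j k) ^ 2) ≤ 1)
    (W : Matrix (Fin m) (Fin d) ℝ) (Wl : Fin K → Matrix (Fin m) (Fin d) ℝ)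
    (sel : Fin K → Fin n)
    (B : ℝ) (hB : 0 ≤ B)
    (hD : ∀ i, ∑ r, (Dv (Wl i) v (X i (sel i)) r - Dv W v (X i (sel i)) r) ^ 2 ≤ B) :
    (1 / (K : ℝ)) * ∑ i, frobSq
        ((n : ℝ) • grad (Wl i) v (X i (sel i)) (Y i (sel i)) -
          (n : ℝ) • grad W v (X i (sel i)) (Y i (sel i))) ≤
      (2 * (m : ℝ) ^ 2 * n ^ 2 / d ^ 2) * ((1 / (K : ℝ)) * ∑ i, frobSq (Wl i - W)) +
      (2 * (n : ℝ) ^ 2 * B / d) *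
        ((1 / (K : ℝ)) * ∑ i, ∑ j, (nnf W v (X i j) - Y i j) ^ 2) := by
  have hd' : (0:ℝ) < d := by exact_mod_cast hd
  have hKinv : (0:ℝ) ≤ 1 / (K:ℝ) := by positivity
  have hper : ∀ i, frobSq
      ((n : ℝ) • grad (Wl i) v (X i (sel i)) (Y i (sel i)) -
        (n : ℝ) • grad W v (X i (sel i)) (Y i (sel i))) ≤
      (2 * (m : ℝ) ^ 2 * n ^ 2 / d ^ 2) * frobSq (Wl i - W) +
      (2 * (n : ℝ) ^ 2 * B / d) * ∑ j, (nnf W v (X i j) - Y i j) ^ 2 := by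
    intro i
    have hxnn : (0:ℝ) ≤ ∑ k, (X i (sel i) k) ^ 2 :=
      Finset.sum_nonneg fun k _ => sq_nonneg _
    have hx1 : ∑ k, (X i (sel i) k) ^ 2 ≤ 1 := by
      have h := hX i (sel i)
      nlinarith [Real.sq_sqrt hxnn, Real.sqrt_nonneg (∑ k, (X i (sel i) k) ^ 2)]
    have hkey := key_lemma m d n hd v hv (X i (sel i)) hx1 (Y i (sel i)) W (Wl i) B (hD i)
    refine le_trans hkey (add_le_add (le_refl _) (mul_le_mul_of_nonneg_left
      (Finset.single_le_sum (f := fun j => (nnf W v (X i j) - Y i j)^2) (fun j _ => sq_nonneg _) (Finset.mem_univ (sel i)))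
      (by positivity)))
  calc (1 / (K : ℝ)) * ∑ i, frobSq
        ((n : ℝ) • grad (Wl i) v (X i (sel i)) (Y i (sel i)) -
          (n : ℝ) • grad W v (X i (sel i)) (Y i (sel i)))
      ≤ (1 / (K : ℝ)) * ∑ i, ((2 * (m : ℝ) ^ 2 * n ^ 2 / d ^ 2) * frobSq (Wl i - W) +
          (2 * (n : ℝ) ^ 2 * B / d) * ∑ j, (nnf W v (X i j) - Y i j) ^ 2) := by
        exact mul_le_mul_of_nonneg_left (Finset.sum_le_sum fun i _ => hper i) hKinv
    _ = (2 * (m : ℝ) ^ 2 * n ^ 2 / d ^ 2) * ((1 / (K : ℝ)) * ∑ i, frobSq (Wl i - W)) +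
        (2 * (n : ℝ) ^ 2 * B / d) *
          ((1 / (K : ℝ)) * ∑ i, ∑ j, (nnf W v (X i j) - Y i j) ^ 2) := by
        rw [Finset.sum_add_distrib, ← Finset.mul_sum, ← Finset.mul_sum]
        ring
end

section
/- Consider Local SGD on a block starting at iteration t_c with τ ≥ 1 local steps and step size η > 0, with arbitrary choices of sampled points, and suppose 2m²n²η²τ²/d² ≤ 1/2. Then for every t with t_c ≤ t ≤ t_c + τ, (1/K)·Σ_{i=1}^K ‖W^{(i)}(t) − W(t)‖_F² ≤ (8m³n⁴τ³η⁴/d³ + 2mn²τη²/d)·Σ_{t'=t_c}^{t−1} Q(W(t')). -/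
open Finset

lemma aux_frobSq_nonneg {m d : ℕ} (M : Matrix (Fin m) (Fin d) ℝ) : 0 ≤ frobSq M := by
  unfold frobSq; positivity

lemma aux_frobSq_smul {m d : ℕ} (c : ℝ) (M : Matrix (Fin m) (Fin d) ℝ) :
    frobSq (c • M) = c^2 * frobSq M := by
  unfold frobSq
  simp [Matrix.smul_apply, smul_eq_mul, mul_pow, Finset.mul_sum]

lemma aux_var_real {K : ℕ} (f : Fin K → ℝ) :
    ∑ i, ((K:ℝ)⁻¹ * (∑ i', f i') - f i)^2 ≤ ∑ i, (f i)^2 := by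
  rcases Nat.eq_zero_or_pos K with h | h
  · subst h; simp
  · have hK : (0:ℝ) < K := by exact_mod_cast h
    set μ := (K:ℝ)⁻¹ * ∑ i', f i' with hμdef
    have expand : ∑ i, (μ - f i)^2 = (K:ℝ)*μ^2 - 2*μ*(∑ i, f i) + ∑ i, (f i)^2 := by
      have h1 : ∀ i : Fin K, (μ - f i)^2 = μ^2 - 2*μ*f i + (f i)^2 := fun i => by ring
      rw [Finset.sum_congr rfl fun i _ => h1 i, Finset.sum_add_distrib,
        Finset.sum_sub_distrib, ← Finset.mul_sum, Finset.sum_const, Finset.card_univ,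
        Fintype.card_fin, nsmul_eq_mul]
    have hS : ∑ i, f i = (K:ℝ) * μ := by
      rw [hμdef]; field_simp
    have hneg : (K:ℝ)*μ^2 - 2*μ*(∑ i, f i) ≤ 0 := by
      rw [hS]; nlinarith [sq_nonneg μ]
    linarith [expand]

lemma aux_var {K m d : ℕ} (A : Fin K → Matrix (Fin m) (Fin d) ℝ) :
    ∑ i, frobSq ((K:ℝ)⁻¹ • ∑ i', A i' - A i) ≤ ∑ i, frobSq (A i) := by
  unfold frobSq
  have h1 : ∀ (B : Fin K → Matrix (Fin m) (Fin d) ℝ),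
      ∑ i, ∑ r, ∑ c, (B i r c)^2 = ∑ r, ∑ c, ∑ i, (B i r c)^2 := fun B => by
    rw [Finset.sum_comm]
    exact Finset.sum_congr rfl fun r _ => Finset.sum_comm
  rw [h1, h1]
  refine Finset.sum_le_sum fun r _ => Finset.sum_le_sum fun c _ => ?_
  have := aux_var_real (fun i => A i r c)
  simpa [Matrix.sub_apply, Matrix.smul_apply, Matrix.sum_apply, smul_eq_mul] using this

lemma aux_frobSq_sum_le {m d : ℕ} (s : Finset ℕ) (F : ℕ → Matrix (Fin m) (Fin d) ℝ) :
    frobSq (∑ t ∈ s, F t) ≤ (s.card : ℝ) * ∑ t ∈ s, frobSq (F t) := by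
  unfold frobSq
  simp only [Matrix.sum_apply]
  calc ∑ r, ∑ c, (∑ t ∈ s, F t r c)^2
      ≤ ∑ r, ∑ c, ((s.card : ℝ) * ∑ t ∈ s, (F t r c)^2) := by
        refine Finset.sum_le_sum fun r _ => Finset.sum_le_sum fun c _ =>
          sq_sum_le_card_mul_sum_sq
    _ = (s.card : ℝ) * ∑ t ∈ s, ∑ r, ∑ c, (F t r c)^2 := by
        simp only [← Finset.mul_sum]
        congr 1
        exact (Finset.sum_congr rfl fun r _ => Finset.sum_comm).trans Finset.sum_comm

lemma aux_sum_swap3 {K m : ℕ} (s : Finset ℕ) (g : Fin K → ℕ → ℝ) :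
    ∑ i, ∑ t ∈ s, g i t = ∑ t ∈ s, ∑ i, g i t := Finset.sum_comm

lemma aux_grad_le {m d : ℕ} (hd : 0 < d) (W : Matrix (Fin m) (Fin d) ℝ)
    (v : Fin m → ℝ) (x : Fin d → ℝ) (y : ℝ)
    (hv : ∀ r, |v r| ≤ 1) (hx : ∑ k, (x k)^2 ≤ 1) :
    frobSq (grad W v x y) ≤ ((m:ℝ)/d) * (nnf W v x - y)^2 := by
  have hd' : (0:ℝ) < d := by exact_mod_cast hd
  have hsq : (1 / Real.sqrt d)^2 = 1/d := by
    rw [div_pow, one_pow, Real.sq_sqrt hd'.le]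
  unfold frobSq grad
  have key : ∀ r : Fin m,
      ∑ j, ((1 / Real.sqrt d) * (nnf W v x - y) * v r *
        (if 0 < ∑ k, W r k * x k then (1:ℝ) else 0) * x j)^2
      ≤ (1/(d:ℝ)) * (nnf W v x - y)^2 := by
    intro r
    have hv2 : (v r)^2 ≤ 1 := by
      rw [← sq_abs]
      nlinarith [hv r, abs_nonneg (v r)]
    have hind : (if 0 < ∑ k, W r k * x k then (1:ℝ) else 0)^2 ≤ 1 := by
      split <;> norm_num
    calc ∑ j, ((1 / Real.sqrt d) * (nnf W v x - y) * v r *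
          (if 0 < ∑ k, W r k * x k then (1:ℝ) else 0) * x j)^2
        = (1/(d:ℝ)) * (nnf W v x - y)^2 * (v r)^2 *
          (if 0 < ∑ k, W r k * x k then (1:ℝ) else 0)^2 * ∑ j, (x j)^2 := by
          rw [Finset.mul_sum]
          refine Finset.sum_congr rfl fun j _ => ?_
          rw [← hsq]; ring
      _ ≤ (1/(d:ℝ)) * (nnf W v x - y)^2 * 1 * 1 * 1 := by
          gcongr <;> first | positivity | assumption
      _ = (1/(d:ℝ)) * (nnf W v x - y)^2 := by ring
  calc ∑ r, ∑ j, ((1 / Real.sqrt d) * (nnf W v x - y) * v r *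
        (if 0 < ∑ k, W r k * x k then (1:ℝ) else 0) * x j)^2
      ≤ ∑ _r : Fin m, (1/(d:ℝ)) * (nnf W v x - y)^2 :=
        Finset.sum_le_sum fun r _ => key r
    _ = (m:ℝ) * ((1/(d:ℝ)) * (nnf W v x - y)^2) := by
        rw [Finset.sum_const, Finset.card_univ, Fintype.card_fin, nsmul_eq_mul]
    _ = ((m:ℝ)/d) * (nnf W v x - y)^2 := by ring

lemma aux_lip {m d : ℕ} (hd : 0 < d) (W W' : Matrix (Fin m) (Fin d) ℝ)
    (v : Fin m → ℝ) (x : Fin d → ℝ)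
    (hv : ∀ r, |v r| ≤ 1) (hx : ∑ k, (x k)^2 ≤ 1) :
    (nnf W v x - nnf W' v x)^2 ≤ ((m:ℝ)/d) * frobSq (W - W') := by
  have hd' : (0:ℝ) < d := by exact_mod_cast hd
  have hsd : (0:ℝ) < Real.sqrt d := Real.sqrt_pos.mpr hd'
  -- difference formula
  have hdiff : nnf W v x - nnf W' v x
      = (1 / Real.sqrt d) * ∑ r, v r * (max (∑ j, W r j * x j) 0 - max (∑ j, W' r j * x j) 0) := by
    unfold nnf
    rw [← mul_sub, ← Finset.sum_sub_distrib]
    congr 1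
    exact Finset.sum_congr rfl fun r _ => by ring
  have habs : |nnf W v x - nnf W' v x|
      ≤ (1 / Real.sqrt d) * ∑ r, |∑ j, (W - W') r j * x j| := by
    rw [hdiff, abs_mul, abs_of_pos (by positivity : (0:ℝ) < 1 / Real.sqrt d)]
    refine mul_le_mul_of_nonneg_left ?_ (by positivity)
    refine (Finset.abs_sum_le_sum_abs _ _).trans ?_
    refine Finset.sum_le_sum fun r _ => ?_
    rw [abs_mul]
    have h1 : |max (∑ j, W r j * x j) 0 - max (∑ j, W' r j * x j) 0|
        ≤ |∑ j, W r j * x j - ∑ j, W' r j * x j| := abs_max_sub_max_le_abs _ _ 0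
    have h2 : ∑ j, W r j * x j - ∑ j, W' r j * x j = ∑ j, (W - W') r j * x j := by
      rw [← Finset.sum_sub_distrib]
      exact Finset.sum_congr rfl fun j _ => by simp [Matrix.sub_apply]; ring
    calc |v r| * |max (∑ j, W r j * x j) 0 - max (∑ j, W' r j * x j) 0|
        ≤ 1 * |∑ j, W r j * x j - ∑ j, W' r j * x j| :=
          mul_le_mul (hv r) h1 (abs_nonneg _) zero_le_one
      _ = |∑ j, (W - W') r j * x j| := by rw [one_mul, h2]
  -- per-row Cauchy-Schwarz
  have hrow : ∀ r, (∑ j, (W - W') r j * x j)^2 ≤ ∑ j, ((W - W') r j)^2 := by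
    intro r
    calc (∑ j, (W - W') r j * x j)^2
        ≤ (∑ j, ((W - W') r j)^2) * ∑ j, (x j)^2 := Finset.sum_mul_sq_le_sq_mul_sq _ _ _
      _ ≤ (∑ j, ((W - W') r j)^2) * 1 := by
          refine mul_le_mul_of_nonneg_left hx (by positivity)
      _ = _ := mul_one _
  have hsum : (∑ r, |∑ j, (W - W') r j * x j|)^2 ≤ (m:ℝ) * frobSq (W - W') := by
    calc (∑ r, |∑ j, (W - W') r j * x j|)^2
        ≤ (Finset.univ.card : ℝ) * ∑ r, |∑ j, (W - W') r j * x j|^2 :=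
          sq_sum_le_card_mul_sum_sq
      _ = (m:ℝ) * ∑ r, (∑ j, (W - W') r j * x j)^2 := by
          rw [Finset.card_univ, Fintype.card_fin]
          congr 1
          exact Finset.sum_congr rfl fun r _ => sq_abs _
      _ ≤ (m:ℝ) * frobSq (W - W') := by
          refine mul_le_mul_of_nonneg_left ?_ (by positivity)
          exact Finset.sum_le_sum fun r _ => hrow r
  calc (nnf W v x - nnf W' v x)^2
      = |nnf W v x - nnf W' v x|^2 := (sq_abs _).symm
    _ ≤ ((1 / Real.sqrt d) * ∑ r, |∑ j, (W - W') r j * x j|)^2 := by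
        refine pow_le_pow_left₀ (abs_nonneg _) habs 2
    _ = (1/(d:ℝ)) * (∑ r, |∑ j, (W - W') r j * x j|)^2 := by
        rw [mul_pow, div_pow, one_pow, Real.sq_sqrt hd'.le]
    _ ≤ (1/(d:ℝ)) * ((m:ℝ) * frobSq (W - W')) := by
        refine mul_le_mul_of_nonneg_left hsum (by positivity)
    _ = ((m:ℝ)/d) * frobSq (W - W') := by ring

lemma aux_alg {K m d n τ : ℕ} (hd : 0 < d) (hK : 0 < K) (η : ℝ) (s : Finset ℕ)
    (SL SF : ℕ → ℝ) :
    (1/(K:ℝ)) * ((η*(n:ℝ))^2 * ((τ:ℝ) * ∑ t' ∈ s,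
        ((m:ℝ)/(d:ℝ)) * (2*SL t' + 2*((m:ℝ)/(d:ℝ))*SF t')))
    = (2*(m:ℝ)*(n:ℝ)^2*(τ:ℝ)*η^2/(d:ℝ)) * ∑ t' ∈ s, (1/(K:ℝ)) * SL t'
      + (2*(m:ℝ)^2*(n:ℝ)^2*(τ:ℝ)*η^2/(d:ℝ)^2) * ∑ t' ∈ s, (1/(K:ℝ)) * SF t' := by
  have hd' : ((d:ℝ)) ≠ 0 := Nat.cast_ne_zero.mpr hd.ne'
  have hK' : ((K:ℝ)) ≠ 0 := Nat.cast_ne_zero.mpr hK.ne'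
  simp only [Finset.mul_sum]
  rw [← Finset.sum_add_distrib]
  refine Finset.sum_congr rfl fun t' _ => ?_
  field_simp

lemma aux_sq_bound (a b L FF md : ℝ) (hL : b^2 ≤ L) (hF : (a-b)^2 ≤ md * FF)
    (hmd : 0 ≤ md) : a^2 ≤ 2*L + 2*(md*FF) := by
  nlinarith [sq_nonneg (a - 2*b)]

theorem stmt9 (m d n K : ℕ) (hm : 0 < m) (hd : 0 < d) (hn : 0 < n) (hK : 0 < K)
    (v : Fin m → ℝ) (hv : ∀ r, |v r| ≤ 1)
    (X : Fin K → Fin n → Fin d → ℝ) (Y : Fin K → Fin n → ℝ)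
    (hX : ∀ i j, Real.sqrt (∑ k, (X i j k) ^ 2) ≤ 1)
    (τ : ℕ) (hτ : 1 ≤ τ) (η : ℝ) (hη : 0 < η)
    (hsmall : 2 * (m : ℝ) ^ 2 * n ^ 2 * η ^ 2 * τ ^ 2 / d ^ 2 ≤ 1 / 2)
    (tc : ℕ) (sel : Fin K → ℕ → Fin n)
    (W0 : Matrix (Fin m) (Fin d) ℝ) (Wloc : Fin K → ℕ → Matrix (Fin m) (Fin d) ℝ)
    (Wbar : ℕ → Matrix (Fin m) (Fin d) ℝ)
    (hinit : ∀ i, Wloc i tc = W0)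
    (hupd : ∀ i, ∀ t, tc ≤ t → t < tc + τ →
      Wloc i (t + 1) = Wloc i t -
        (η * n) • grad (Wloc i t) v (X i (sel i t)) (Y i (sel i t)))
    (hbar : ∀ t, Wbar t = (K : ℝ)⁻¹ • ∑ i, Wloc i t)
    (t : ℕ) (ht1 : tc ≤ t) (ht2 : t ≤ tc + τ) :
    (1 / (K : ℝ)) * ∑ i, frobSq (Wloc i t - Wbar t) ≤
      (8 * (m : ℝ) ^ 3 * n ^ 4 * τ ^ 3 * η ^ 4 / d ^ 3 + 2 * m * n ^ 2 * τ * η ^ 2 / d) *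
        ∑ t' ∈ Finset.Ico tc t,
          (1 / (K : ℝ)) * ∑ i, ∑ j, (nnf (Wbar t') v (X i j) - Y i j) ^ 2 := by
  have hd' : (0:ℝ) < d := by exact_mod_cast hd
  have hK' : (0:ℝ) < K := by exact_mod_cast hK
  have hx2 : ∀ i j, ∑ k, (X i j k)^2 ≤ 1 := by
    intro i j
    have h1 := hX i j
    have h2 : (0:ℝ) ≤ ∑ k, (X i j k)^2 := by positivity
    nlinarith [Real.sq_sqrt h2, Real.sqrt_nonneg (∑ k, (X i j k)^2)]
  set G : Fin K → ℕ → Matrix (Fin m) (Fin d) ℝ :=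
    fun i s => ∑ t' ∈ Finset.Ico tc s, grad (Wloc i t') v (X i (sel i t')) (Y i (sel i t'))
    with hG
  -- telescoping
  have hW : ∀ i s, tc ≤ s → s ≤ tc + τ → Wloc i s = W0 - (η * n) • G i s := by
    intro i s hs
    induction s, hs using Nat.le_induction with
    | base =>
      intro _
      rw [hG]
      simp [hinit i]
    | succ s hs ih =>
      intro hs2
      have h1 : s < tc + τ := by omega
      have hGs : G i (s+1) = G i s + grad (Wloc i s) v (X i (sel i s)) (Y i (sel i s)) := by
        rw [hG]
        exact Finset.sum_Ico_succ_top hs _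
      rw [hupd i s hs h1, hGs, smul_add, ih (by omega)]
      abel
  have hWbar : ∀ s, tc ≤ s → s ≤ tc + τ →
      Wbar s = W0 - (η * n) • ((K:ℝ)⁻¹ • ∑ i, G i s) := by
    intro s hs hs2
    rw [hbar s, Finset.sum_congr rfl fun i _ => hW i s hs hs2,
      Finset.sum_sub_distrib, Finset.sum_const, Finset.card_univ, Fintype.card_fin,
      smul_sub]
    congr 1
    · rw [← Nat.cast_smul_eq_nsmul ℝ, smul_smul,
        inv_mul_cancel₀ (Nat.cast_ne_zero.mpr hK.ne'), one_smul]
    · rw [← Finset.smul_sum, smul_comm]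
  have hdiffW : ∀ i s, tc ≤ s → s ≤ tc + τ →
      Wloc i s - Wbar s = (η * n) • ((K:ℝ)⁻¹ • ∑ i', G i' s - G i s) := by
    intro i s h1 h2
    rw [hW i s h1 h2, hWbar s h1 h2, smul_sub]
    abel
  -- the key recursive inequality
  have hkey : ∀ s, tc ≤ s → s ≤ tc + τ →
      (1 / (K : ℝ)) * ∑ i, frobSq (Wloc i s - Wbar s) ≤
        (2*(m:ℝ)*(n:ℝ)^2*(τ:ℝ)*η^2/(d:ℝ)) * ∑ t' ∈ Finset.Ico tc s,
            (1 / (K : ℝ)) * ∑ i, ∑ j, (nnf (Wbar t') v (X i j) - Y i j) ^ 2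
        + (2*(m:ℝ)^2*(n:ℝ)^2*(τ:ℝ)*η^2/(d:ℝ)^2) * ∑ t' ∈ Finset.Ico tc s,
            (1 / (K : ℝ)) * ∑ i, frobSq (Wloc i t' - Wbar t') := by
    intro s hs1 hs2
    have hGb : ∀ i : Fin K, frobSq (G i s) ≤ (τ:ℝ) * ∑ t' ∈ Finset.Ico tc s,
        ((m:ℝ)/(d:ℝ)) * (2 * (∑ j, (nnf (Wbar t') v (X i j) - Y i j)^2)
          + 2*((m:ℝ)/(d:ℝ)) * frobSq (Wloc i t' - Wbar t')) := by
      intro i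
      have hcard : ((Finset.Ico tc s).card : ℝ) ≤ (τ:ℝ) := by
        rw [Nat.card_Ico]
        exact_mod_cast (by omega : s - tc ≤ τ)
      calc frobSq (G i s)
          ≤ ((Finset.Ico tc s).card : ℝ) * ∑ t' ∈ Finset.Ico tc s,
              frobSq (grad (Wloc i t') v (X i (sel i t')) (Y i (sel i t'))) := by
            rw [hG]; exact aux_frobSq_sum_le _ _
        _ ≤ (τ:ℝ) * ∑ t' ∈ Finset.Ico tc s,
              frobSq (grad (Wloc i t') v (X i (sel i t')) (Y i (sel i t'))) := by
            refine mul_le_mul_of_nonneg_right hcard ?_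
            exact Finset.sum_nonneg fun t' _ => aux_frobSq_nonneg _
        _ ≤ (τ:ℝ) * ∑ t' ∈ Finset.Ico tc s,
              ((m:ℝ)/(d:ℝ)) * (nnf (Wloc i t') v (X i (sel i t')) - Y i (sel i t'))^2 := by
            refine mul_le_mul_of_nonneg_left
              (Finset.sum_le_sum fun t' _ => aux_grad_le hd _ v _ _ hv (hx2 i _))
              (by positivity)
        _ ≤ (τ:ℝ) * ∑ t' ∈ Finset.Ico tc s,
              ((m:ℝ)/(d:ℝ)) * (2 * (∑ j, (nnf (Wbar t') v (X i j) - Y i j)^2)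
                + 2*((m:ℝ)/(d:ℝ)) * frobSq (Wloc i t' - Wbar t')) := by
            refine mul_le_mul_of_nonneg_left (Finset.sum_le_sum fun t' _ => ?_) (by positivity)
            refine mul_le_mul_of_nonneg_left ?_ (by positivity)
            have hl := aux_lip hd (Wloc i t') (Wbar t') v (X i (sel i t')) hv (hx2 i (sel i t'))
            have hLs : (nnf (Wbar t') v (X i (sel i t')) - Y i (sel i t'))^2
                ≤ ∑ j, (nnf (Wbar t') v (X i j) - Y i j)^2 :=
              Finset.single_le_sum (f := fun j => (nnf (Wbar t') v (X i j) - Y i j)^2)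
                (fun j _ => sq_nonneg _) (Finset.mem_univ (sel i t'))
            have h2md : (0:ℝ) ≤ (m:ℝ)/(d:ℝ) := by positivity
            have := aux_sq_bound (nnf (Wloc i t') v (X i (sel i t')) - Y i (sel i t'))
              (nnf (Wbar t') v (X i (sel i t')) - Y i (sel i t'))
              (∑ j, (nnf (Wbar t') v (X i j) - Y i j)^2)
              (frobSq (Wloc i t' - Wbar t')) ((m:ℝ)/(d:ℝ))
              hLs (by simpa using hl) h2md
            linarith [this]
    calc (1 / (K : ℝ)) * ∑ i, frobSq (Wloc i s - Wbar s)
        = (1 / (K : ℝ)) * ∑ i, (η * (n:ℝ))^2 * frobSq ((K:ℝ)⁻¹ • ∑ i', G i' s - G i s) := by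
          congr 1
          refine Finset.sum_congr rfl fun i _ => ?_
          rw [hdiffW i s hs1 hs2, aux_frobSq_smul]
      _ = (1 / (K : ℝ)) * ((η * (n:ℝ))^2 * ∑ i, frobSq ((K:ℝ)⁻¹ • ∑ i', G i' s - G i s)) := by
          simp only [Finset.mul_sum]
      _ ≤ (1 / (K : ℝ)) * ((η * (n:ℝ))^2 * ∑ i, frobSq (G i s)) := by
          refine mul_le_mul_of_nonneg_left
            (mul_le_mul_of_nonneg_left (aux_var _) (by positivity)) (by positivity)
      _ ≤ (1 / (K : ℝ)) * ((η * (n:ℝ))^2 * ∑ i, (τ:ℝ) * ∑ t' ∈ Finset.Ico tc s,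
            ((m:ℝ)/(d:ℝ)) * (2 * (∑ j, (nnf (Wbar t') v (X i j) - Y i j)^2)
              + 2*((m:ℝ)/(d:ℝ)) * frobSq (Wloc i t' - Wbar t'))) := by
          refine mul_le_mul_of_nonneg_left
            (mul_le_mul_of_nonneg_left (Finset.sum_le_sum fun i _ => hGb i) (by positivity))
            (by positivity)
      _ = (1 / (K : ℝ)) * ((η * (n:ℝ))^2 * ((τ:ℝ) * ∑ t' ∈ Finset.Ico tc s,
            ((m:ℝ)/(d:ℝ)) * (2 * (∑ i, ∑ j, (nnf (Wbar t') v (X i j) - Y i j)^2)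
              + 2*((m:ℝ)/(d:ℝ)) * (∑ i, frobSq (Wloc i t' - Wbar t'))))) := by
          congr 2
          rw [← Finset.mul_sum]
          congr 1
          refine Finset.sum_comm.trans (Finset.sum_congr rfl fun t' _ => ?_)
          rw [← Finset.mul_sum]
          congr 1
          rw [Finset.sum_add_distrib, ← Finset.mul_sum, ← Finset.mul_sum]
      _ = _ := aux_alg hd hK η _ _ _
  -- monotonicity of the loss sum
  have hQb : ∀ t', 0 ≤ (1 / (K : ℝ)) * ∑ i, ∑ j, (nnf (Wbar t') v (X i j) - Y i j) ^ 2 := by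
    intro t'; positivity
  have hmono : ∀ s s', tc ≤ s' → s' ≤ s →
      ∑ t' ∈ Finset.Ico tc s', (1 / (K : ℝ)) * ∑ i, ∑ j, (nnf (Wbar t') v (X i j) - Y i j) ^ 2
      ≤ ∑ t' ∈ Finset.Ico tc s, (1 / (K : ℝ)) * ∑ i, ∑ j, (nnf (Wbar t') v (X i j) - Y i j) ^ 2 := by
    intro s s' h1 h2
    exact Finset.sum_le_sum_of_subset_of_nonneg
      (Finset.Ico_subset_Ico le_rfl h2) (fun t' _ _ => hQb t')
  -- constants
  have hceq : (8 * (m : ℝ) ^ 3 * n ^ 4 * τ ^ 3 * η ^ 4 / d ^ 3 + 2 * m * n ^ 2 * τ * η ^ 2 / d)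
      = (2*(m:ℝ)*(n:ℝ)^2*(τ:ℝ)*η^2/(d:ℝ))
        + 2 * (2 * (m : ℝ) ^ 2 * n ^ 2 * η ^ 2 * τ ^ 2 / d ^ 2)
          * (2*(m:ℝ)*(n:ℝ)^2*(τ:ℝ)*η^2/(d:ℝ)) := by
    field_simp
    ring
  have hc0 : (0:ℝ) ≤ 2*(m:ℝ)*(n:ℝ)^2*(τ:ℝ)*η^2/(d:ℝ) := by positivity
  have hC2c : (8 * (m : ℝ) ^ 3 * n ^ 4 * τ ^ 3 * η ^ 4 / d ^ 3 + 2 * m * n ^ 2 * τ * η ^ 2 / d)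
      ≤ 2 * (2*(m:ℝ)*(n:ℝ)^2*(τ:ℝ)*η^2/(d:ℝ)) := by
    nlinarith [hceq, hsmall, hc0]
  have hετ : (2*(m:ℝ)^2*(n:ℝ)^2*(τ:ℝ)*η^2/(d:ℝ)^2) * (τ:ℝ)
      = 2 * (m : ℝ) ^ 2 * n ^ 2 * η ^ 2 * τ ^ 2 / d ^ 2 := by ring
  -- main induction
  have main : ∀ s, tc ≤ s → s ≤ tc + τ →
      (1 / (K : ℝ)) * ∑ i, frobSq (Wloc i s - Wbar s) ≤
      (8 * (m : ℝ) ^ 3 * n ^ 4 * τ ^ 3 * η ^ 4 / d ^ 3 + 2 * m * n ^ 2 * τ * η ^ 2 / d) *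
        ∑ t' ∈ Finset.Ico tc s,
          (1 / (K : ℝ)) * ∑ i, ∑ j, (nnf (Wbar t') v (X i j) - Y i j) ^ 2 := by
    intro s
    induction s using Nat.strong_induction_on with
    | _ s ih =>
      intro hs1 hs2
      have hSQ0 : 0 ≤ ∑ t' ∈ Finset.Ico tc s,
          (1 / (K : ℝ)) * ∑ i, ∑ j, (nnf (Wbar t') v (X i j) - Y i j) ^ 2 :=
        Finset.sum_nonneg fun t' _ => hQb t'
      have hAsum : ∑ t' ∈ Finset.Ico tc s,
            (1 / (K : ℝ)) * ∑ i, frobSq (Wloc i t' - Wbar t')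
          ≤ (τ:ℝ) * ((8 * (m : ℝ) ^ 3 * n ^ 4 * τ ^ 3 * η ^ 4 / d ^ 3
              + 2 * m * n ^ 2 * τ * η ^ 2 / d) *
            ∑ t' ∈ Finset.Ico tc s,
              (1 / (K : ℝ)) * ∑ i, ∑ j, (nnf (Wbar t') v (X i j) - Y i j) ^ 2) := by
        have hCpos : (0:ℝ) ≤ 8 * (m : ℝ) ^ 3 * n ^ 4 * τ ^ 3 * η ^ 4 / d ^ 3
            + 2 * m * n ^ 2 * τ * η ^ 2 / d := by positivity
        calc ∑ t' ∈ Finset.Ico tc s, (1 / (K : ℝ)) * ∑ i, frobSq (Wloc i t' - Wbar t')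
            ≤ ∑ t' ∈ Finset.Ico tc s,
              ((8 * (m : ℝ) ^ 3 * n ^ 4 * τ ^ 3 * η ^ 4 / d ^ 3
                + 2 * m * n ^ 2 * τ * η ^ 2 / d) *
              ∑ t'' ∈ Finset.Ico tc s,
                (1 / (K : ℝ)) * ∑ i, ∑ j, (nnf (Wbar t'') v (X i j) - Y i j) ^ 2) := by
              refine Finset.sum_le_sum fun t' ht' => ?_
              have hmem := Finset.mem_Ico.mp ht'
              refine (ih t' hmem.2 hmem.1 (by omega)).trans ?_
              exact mul_le_mul_of_nonneg_left (hmono s t' hmem.1 hmem.2.le) hCpos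
          _ = ((Finset.Ico tc s).card : ℝ) *
              ((8 * (m : ℝ) ^ 3 * n ^ 4 * τ ^ 3 * η ^ 4 / d ^ 3
                + 2 * m * n ^ 2 * τ * η ^ 2 / d) *
              ∑ t'' ∈ Finset.Ico tc s,
                (1 / (K : ℝ)) * ∑ i, ∑ j, (nnf (Wbar t'') v (X i j) - Y i j) ^ 2) := by
              rw [Finset.sum_const, nsmul_eq_mul]
          _ ≤ (τ:ℝ) * _ := by
              refine mul_le_mul_of_nonneg_right ?_ (by positivity)
              rw [Nat.card_Ico]
              exact_mod_cast (by omega : s - tc ≤ τ)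
      have hk := hkey s hs1 hs2
      -- combine
      set SQ := ∑ t' ∈ Finset.Ico tc s,
          (1 / (K : ℝ)) * ∑ i, ∑ j, (nnf (Wbar t') v (X i j) - Y i j) ^ 2 with hSQ
      have step : (2*(m:ℝ)^2*(n:ℝ)^2*(τ:ℝ)*η^2/(d:ℝ)^2) *
          ∑ t' ∈ Finset.Ico tc s, (1 / (K : ℝ)) * ∑ i, frobSq (Wloc i t' - Wbar t')
          ≤ (2 * (m : ℝ) ^ 2 * n ^ 2 * η ^ 2 * τ ^ 2 / d ^ 2) *
            ((8 * (m : ℝ) ^ 3 * n ^ 4 * τ ^ 3 * η ^ 4 / d ^ 3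
              + 2 * m * n ^ 2 * τ * η ^ 2 / d) * SQ) := by
        calc (2*(m:ℝ)^2*(n:ℝ)^2*(τ:ℝ)*η^2/(d:ℝ)^2) *
            ∑ t' ∈ Finset.Ico tc s, (1 / (K : ℝ)) * ∑ i, frobSq (Wloc i t' - Wbar t')
            ≤ (2*(m:ℝ)^2*(n:ℝ)^2*(τ:ℝ)*η^2/(d:ℝ)^2) * ((τ:ℝ) *
              ((8 * (m : ℝ) ^ 3 * n ^ 4 * τ ^ 3 * η ^ 4 / d ^ 3
                + 2 * m * n ^ 2 * τ * η ^ 2 / d) * SQ)) := by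
              refine mul_le_mul_of_nonneg_left hAsum (by positivity)
          _ = ((2*(m:ℝ)^2*(n:ℝ)^2*(τ:ℝ)*η^2/(d:ℝ)^2) * (τ:ℝ)) *
              ((8 * (m : ℝ) ^ 3 * n ^ 4 * τ ^ 3 * η ^ 4 / d ^ 3
                + 2 * m * n ^ 2 * τ * η ^ 2 / d) * SQ) := by ring
          _ = _ := by rw [hετ]
      have hCSQ : (8 * (m : ℝ) ^ 3 * n ^ 4 * τ ^ 3 * η ^ 4 / d ^ 3
          + 2 * m * n ^ 2 * τ * η ^ 2 / d) * SQ
          ≤ 2 * (2*(m:ℝ)*(n:ℝ)^2*(τ:ℝ)*η^2/(d:ℝ)) * SQ :=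
        mul_le_mul_of_nonneg_right hC2c hSQ0
      have hE0 : (0:ℝ) ≤ 2 * (m : ℝ) ^ 2 * n ^ 2 * η ^ 2 * τ ^ 2 / d ^ 2 := by positivity
      have h3 := mul_le_mul_of_nonneg_left hCSQ hE0
      have hdne : (d:ℝ) ≠ 0 := hd'.ne'
      have heq2 : (2*(m:ℝ)*(n:ℝ)^2*(τ:ℝ)*η^2/(d:ℝ)) * SQ
          + (2 * (m : ℝ) ^ 2 * n ^ 2 * η ^ 2 * τ ^ 2 / d ^ 2) *
            (2 * (2*(m:ℝ)*(n:ℝ)^2*(τ:ℝ)*η^2/(d:ℝ)) * SQ)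
          = (8 * (m : ℝ) ^ 3 * n ^ 4 * τ ^ 3 * η ^ 4 / d ^ 3
              + 2 * m * n ^ 2 * τ * η ^ 2 / d) * SQ := by
        field_simp
        ring
      linarith [hk, step, h3, heq2]
  exact main t ht1 ht2
end

section
/- Let τ ≥ 1 be an integer, ρ ∈ (0,1], C ≥ 0 with C·τ² ≤ ρ/2, and let h be an integer with 0 ≤ h ≤ τ. Let ℓ : {0,1,…,h+1} → [0,∞) satisfy ℓ_{t+1} ≤ (1−ρ)·ℓ_t + C·Σ_{t'=0}^{t−1} ℓ_{t'} for every t with 0 ≤ t ≤ h. Then Σ_{t=0}^{h} ℓ_t ≤ (2/ρ)·ℓ_0. -/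
open Finset

theorem stmt11 (τ : ℕ) (hτ : 1 ≤ τ) (ρ C : ℝ) (hρ0 : 0 < ρ) (hρ1 : ρ ≤ 1)
    (hC : 0 ≤ C) (hCτ : C * (τ : ℝ) ^ 2 ≤ ρ / 2)
    (h : ℕ) (hh : h ≤ τ)
    (ℓ : ℕ → ℝ) (hnn : ∀ t ≤ h + 1, 0 ≤ ℓ t)
    (hrec : ∀ t ≤ h, ℓ (t + 1) ≤ (1 - ρ) * ℓ t + C * ∑ t' ∈ Finset.range t, ℓ t') :
    ∑ t ∈ Finset.range (h + 1), ℓ t ≤ (2 / ρ) * ℓ 0 := by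
  set S := ∑ t ∈ Finset.range (h + 1), ℓ t with hSdef
  have hSnn : 0 ≤ S :=
    Finset.sum_nonneg fun t ht => hnn t (by simp at ht; omega)
  have hsub : ∀ t ≤ h + 1, ∑ t' ∈ Finset.range t, ℓ t' ≤ S := by
    intro t ht
    apply Finset.sum_le_sum_of_subset_of_nonneg (Finset.range_subset_range.2 ht)
    intro i hi _
    exact hnn i (by simp at hi; omega)
  -- sum of shifted sequence
  have h1 : S - ℓ 0 ≤ ∑ t ∈ Finset.range (h + 1), ℓ (t + 1) := by
    have e : ∑ t ∈ Finset.range (h + 2), ℓ t =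
        (∑ t ∈ Finset.range (h + 1), ℓ (t + 1)) + ℓ 0 :=
      Finset.sum_range_succ' (fun t => ℓ t) (h + 1)
    have e2 : ∑ t ∈ Finset.range (h + 2), ℓ t = S + ℓ (h + 1) := by
      rw [Finset.sum_range_succ]
    have := hnn (h + 1) le_rfl
    linarith [e, e2]
  have h2 : ∑ t ∈ Finset.range (h + 1), ℓ (t + 1) ≤
      (1 - ρ) * S + C * ((h : ℝ) * S) := by
    calc ∑ t ∈ Finset.range (h + 1), ℓ (t + 1)
        ≤ ∑ t ∈ Finset.range (h + 1),
            ((1 - ρ) * ℓ t + C * ∑ t' ∈ Finset.range t, ℓ t') := by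
          apply Finset.sum_le_sum
          intro t ht
          exact hrec t (by simp at ht; omega)
      _ = (1 - ρ) * S + C * ∑ t ∈ Finset.range (h + 1),
            ∑ t' ∈ Finset.range t, ℓ t' := by
          rw [Finset.sum_add_distrib, ← Finset.mul_sum, ← Finset.mul_sum]
      _ ≤ (1 - ρ) * S + C * ((h : ℝ) * S) := by
          have hd : ∑ t ∈ Finset.range (h + 1), ∑ t' ∈ Finset.range t, ℓ t'
              ≤ (h : ℝ) * S := by
            rw [Finset.sum_range_succ' (fun t => ∑ t' ∈ Finset.range t, ℓ t') h]
            simp only [Finset.range_zero, Finset.sum_empty, add_zero]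
            calc ∑ i ∈ Finset.range h, ∑ t' ∈ Finset.range (i + 1), ℓ t'
                ≤ ∑ _i ∈ Finset.range h, S := by
                  apply Finset.sum_le_sum
                  intro i hi
                  exact hsub (i + 1) (by simp at hi; omega)
              _ = (h : ℝ) * S := by simp [mul_comm]
          have := mul_le_mul_of_nonneg_left hd hC
          linarith
  -- C * h ≤ ρ/2
  have hCh : C * (h : ℝ) ≤ ρ / 2 := by
    have hτ2 : (τ : ℝ) ≤ (τ : ℝ) ^ 2 := by
      have : (1 : ℝ) ≤ (τ : ℝ) := by exact_mod_cast hτ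
      nlinarith
    have hhτ : (h : ℝ) ≤ (τ : ℝ) := by exact_mod_cast hh
    nlinarith
  have key : S - ℓ 0 ≤ (1 - ρ) * S + (ρ / 2) * S := by
    have : C * ((h : ℝ) * S) ≤ (ρ / 2) * S := by
      have := mul_le_mul_of_nonneg_right hCh hSnn
      linarith [this]
    linarith
  -- conclude: (ρ/2) S ≤ ℓ 0
  have hfin : (ρ / 2) * S ≤ ℓ 0 := by linarith
  rw [div_mul_eq_mul_div, le_div_iff₀ hρ0]
  nlinarith
end

section
/- Let τ ≥ 1 be an integer, ρ ∈ (0,1], C ≥ 0 with C·τ² ≤ ρ/2, and let ℓ : {0,1,…,τ} → [0,∞) satisfy ℓ_{t+1} ≤ (1−ρ)·ℓ_t + C·Σ_{t'=0}^{t−1} ℓ_{t'} for every t with 0 ≤ t < τ. Then ℓ_τ ≤ ((1−ρ)^τ + 2Cτ/ρ)·ℓ_0. -/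
open Finset

theorem stmt12 (τ : ℕ) (hτ : 1 ≤ τ) (ρ C : ℝ) (hρ0 : 0 < ρ) (hρ1 : ρ ≤ 1)
    (hC : 0 ≤ C) (hCτ : C * (τ : ℝ) ^ 2 ≤ ρ / 2)
    (ℓ : ℕ → ℝ) (hnn : ∀ t ≤ τ, 0 ≤ ℓ t)
    (hrec : ∀ t < τ, ℓ (t + 1) ≤ (1 - ρ) * ℓ t + C * ∑ t' ∈ Finset.range t, ℓ t') :
    ℓ τ ≤ ((1 - ρ) ^ τ + 2 * C * τ / ρ) * ℓ 0 := by
  have hℓ0 : 0 ≤ ℓ 0 := hnn 0 (Nat.zero_le _)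
  have h1ρ : 0 ≤ 1 - ρ := by linarith
  -- Claim A: ℓ t ≤ 2 ℓ 0 for all t ≤ τ
  have A : ∀ t, t ≤ τ → ℓ t ≤ 2 * ℓ 0 := by
    intro t
    induction t using Nat.strong_induction_on with
    | _ t ih =>
      intro ht
      match t with
      | 0 => linarith
      | Nat.succ t =>
        have h1 := hrec t (by omega)
        have hsum : ∑ t' ∈ range t, ℓ t' ≤ (t : ℝ) * (2 * ℓ 0) := by
          have := Finset.sum_le_card_nsmul (range t) ℓ (2 * ℓ 0)
            (fun i hi => ih i (by simp at hi; omega) (by simp at hi; omega))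
          simpa [nsmul_eq_mul] using this
        have hℓt : ℓ t ≤ 2 * ℓ 0 := ih t (by omega) (by omega)
        have hℓtnn : 0 ≤ ℓ t := hnn t (by omega)
        have htτ : (t : ℝ) ≤ (τ : ℝ) := by exact_mod_cast Nat.le_of_lt (by omega)
        have hτ1 : (1 : ℝ) ≤ (τ : ℝ) := by exact_mod_cast hτ
        have hCt : C * (t : ℝ) ≤ ρ / 2 := by
          nlinarith [mul_nonneg hC (by linarith : (0:ℝ) ≤ (τ:ℝ) - t),
            mul_nonneg (mul_nonneg hC (by linarith : (0:ℝ) ≤ (τ:ℝ))) (by linarith : (0:ℝ) ≤ (τ:ℝ) - 1)]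
        have hsum' : C * ∑ t' ∈ range t, ℓ t' ≤ C * ((t : ℝ) * (2 * ℓ 0)) :=
          mul_le_mul_of_nonneg_left hsum hC
        nlinarith
  -- Claim B
  have B : ∀ t, t ≤ τ → ℓ t ≤ ((1 - ρ) ^ t + 2 * C * t / ρ) * ℓ 0 := by
    intro t
    induction t with
    | zero => simp
    | succ t ih =>
      intro ht
      have hih := ih (by omega)
      have h1 := hrec t (by omega)
      have hsum : ∑ t' ∈ range t, ℓ t' ≤ (t : ℝ) * (2 * ℓ 0) := by
        have := Finset.sum_le_card_nsmul (range t) ℓ (2 * ℓ 0)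
          (fun i hi => A i (by simp at hi; omega))
        simpa [nsmul_eq_mul] using this
      have hsum' : C * ∑ t' ∈ range t, ℓ t' ≤ C * ((t : ℝ) * (2 * ℓ 0)) :=
        mul_le_mul_of_nonneg_left hsum hC
      have hstep : (1 - ρ) * ℓ t ≤ (1 - ρ) * (((1 - ρ) ^ t + 2 * C * t / ρ) * ℓ 0) :=
        mul_le_mul_of_nonneg_left hih h1ρ
      have key : (1 - ρ) * (((1 - ρ) ^ t + 2 * C * t / ρ) * ℓ 0)
          + C * ((t : ℝ) * (2 * ℓ 0))
          ≤ ((1 - ρ) ^ (t + 1) + 2 * C * (t + 1) / ρ) * ℓ 0 := by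
        have heq : (1 - ρ) * (2 * C * t / ρ) + C * (t : ℝ) * 2 = 2 * C * t / ρ := by
          field_simp; ring
        have : (1 - ρ) * (((1 - ρ) ^ t + 2 * C * t / ρ) * ℓ 0) + C * ((t : ℝ) * (2 * ℓ 0))
            = ((1 - ρ) ^ (t + 1) + 2 * C * t / ρ) * ℓ 0 := by
          rw [pow_succ]; nlinarith [heq]
        rw [this]
        have h2 : 0 ≤ 2 * C / ρ * ℓ 0 := by positivity
        have hd : 2 * C * ((t : ℝ) + 1) / ρ - 2 * C * (t : ℝ) / ρ = 2 * C / ρ := by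
          field_simp; ring
        nlinarith [h2, hd]
      push_cast
      linarith
  have := B τ le_rfl
  simpa using this
end

section
/- Let τ ≥ 1 be an integer, ρ ∈ (0,1], C ≥ 0 with C·τ² ≤ ρ/2, and let ℓ : ℕ → [0,∞) satisfy, for every integer c ≥ 0 and every t with cτ ≤ t < (c+1)τ, ℓ_{t+1} ≤ (1−ρ)·ℓ_t + C·Σ_{t'=cτ}^{t−1} ℓ_{t'}. Then for every integer c ≥ 0, ℓ_{cτ} ≤ ((1−ρ)^τ + 2Cτ/ρ)^c · ℓ_0. -/
open Finset

theorem stmt13 (τ : ℕ) (hτ : 1 ≤ τ) (ρ C : ℝ) (hρ0 : 0 < ρ) (hρ1 : ρ ≤ 1)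
    (hC : 0 ≤ C) (hCτ : C * (τ : ℝ) ^ 2 ≤ ρ / 2)
    (ℓ : ℕ → ℝ) (hnn : ∀ t, 0 ≤ ℓ t)
    (hrec : ∀ c t, c * τ ≤ t → t < (c + 1) * τ →
      ℓ (t + 1) ≤ (1 - ρ) * ℓ t + C * ∑ t' ∈ Finset.Ico (c * τ) t, ℓ t') :
    ∀ c : ℕ, ℓ (c * τ) ≤ ((1 - ρ) ^ τ + 2 * C * τ / ρ) ^ c * ℓ 0 := by
  have hρ' : (0:ℝ) ≤ 1 - ρ := by linarith
  have hτ1 : (1:ℝ) ≤ (τ:ℝ) := by exact_mod_cast hτ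
  have hτ0 : (0:ℝ) ≤ (τ:ℝ) := by linarith
  have hQ0 : 0 ≤ (1 - ρ) ^ τ + 2 * C * (τ:ℝ) / ρ := by
    have h1 : (0:ℝ) ≤ (1 - ρ) ^ τ := pow_nonneg hρ' τ
    have h2 : (0:ℝ) ≤ 2 * C * (τ:ℝ) / ρ := by positivity
    linarith
  have key : ∀ c, ℓ ((c + 1) * τ) ≤ ((1 - ρ) ^ τ + 2 * C * (τ:ℝ) / ρ) * ℓ (c * τ) := by
    intro c
    have hsτ : (c + 1) * τ = c * τ + τ := by ring
    have h1 : ∀ k, k ≤ τ → ℓ (c * τ + k) ≤ ℓ (c * τ) ∧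
        (∑ t' ∈ Finset.Ico (c * τ) (c * τ + k), ℓ t') ≤ (k : ℝ) * ℓ (c * τ) := by
      intro k
      induction k with
      | zero => intro _; simp
      | succ k ih =>
        intro hk
        obtain ⟨ih1, ih2⟩ := ih (Nat.le_of_succ_le hk)
        have hkτ : (k : ℝ) ≤ (τ : ℝ) := by exact_mod_cast Nat.le_of_succ_le hk
        have hk0 : (0:ℝ) ≤ (k : ℝ) := Nat.cast_nonneg k
        have hCk : C * k ≤ ρ := by
          have e1 : C * k ≤ C * τ := mul_le_mul_of_nonneg_left hkτ hC
          have e2 : C * (τ:ℝ) ≤ C * (τ:ℝ) ^ 2 := by nlinarith [mul_nonneg (mul_nonneg hC hτ0) (sub_nonneg.mpr hτ1)]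
          linarith
        have hsum : (∑ t' ∈ Finset.Ico (c * τ) (c * τ + (k + 1)), ℓ t')
            = (∑ t' ∈ Finset.Ico (c * τ) (c * τ + k), ℓ t') + ℓ (c * τ + k) := by
          rw [show c * τ + (k + 1) = (c * τ + k) + 1 from rfl,
            Finset.sum_Ico_succ_top (Nat.le_add_right _ k)]
        have hr : ℓ (c * τ + (k + 1)) ≤ (1 - ρ) * ℓ (c * τ + k)
            + C * ∑ t' ∈ Finset.Ico (c * τ) (c * τ + k), ℓ t' :=
          hrec c (c * τ + k) (Nat.le_add_right _ k) (by omega)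
        have hℓs := hnn (c * τ)
        have e3 : (1 - ρ) * ℓ (c * τ + k) ≤ (1 - ρ) * ℓ (c * τ) :=
          mul_le_mul_of_nonneg_left ih1 hρ'
        have e4 : C * (∑ t' ∈ Finset.Ico (c * τ) (c * τ + k), ℓ t') ≤ C * ((k:ℝ) * ℓ (c * τ)) :=
          mul_le_mul_of_nonneg_left ih2 hC
        have e5 : C * (k:ℝ) * ℓ (c * τ) ≤ ρ * ℓ (c * τ) :=
          mul_le_mul_of_nonneg_right hCk hℓs
        constructor
        · nlinarith [hr, e3, e4, e5]
        · rw [hsum]; push_cast; linarith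
    have h2 : ∀ k, k ≤ τ →
        ℓ (c * τ + k) ≤ ((1 - ρ) ^ k + (C * τ / ρ) * (1 - (1 - ρ) ^ k)) * ℓ (c * τ) := by
      intro k
      induction k with
      | zero => intro _; simp
      | succ k ih =>
        intro hk
        have ihk := ih (Nat.le_of_succ_le hk)
        have hkτ : (k : ℝ) ≤ (τ : ℝ) := by exact_mod_cast Nat.le_of_succ_le hk
        have hsumle := (h1 k (Nat.le_of_succ_le hk)).2
        have hr : ℓ (c * τ + (k + 1)) ≤ (1 - ρ) * ℓ (c * τ + k)
            + C * ∑ t' ∈ Finset.Ico (c * τ) (c * τ + k), ℓ t' :=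
          hrec c (c * τ + k) (Nat.le_add_right _ k) (by omega)
        have hℓs := hnn (c * τ)
        have e4 : C * (∑ t' ∈ Finset.Ico (c * τ) (c * τ + k), ℓ t') ≤ C * ((k:ℝ) * ℓ (c * τ)) :=
          mul_le_mul_of_nonneg_left hsumle hC
        have hmul : (1 - ρ) * ℓ (c * τ + k) ≤
            (1 - ρ) * (((1 - ρ) ^ k + (C * τ / ρ) * (1 - (1 - ρ) ^ k)) * ℓ (c * τ)) :=
          mul_le_mul_of_nonneg_left ihk hρ'
        -- coefficient identity and inequality
        have hid : ((1 - ρ) ^ (k + 1) + (C * τ / ρ) * (1 - (1 - ρ) ^ (k + 1)))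
            - ((1 - ρ) * ((1 - ρ) ^ k + (C * τ / ρ) * (1 - (1 - ρ) ^ k)) + C * k)
            = C * τ - C * k := by
          field_simp
          ring
        have hck : C * (k:ℝ) ≤ C * τ := mul_le_mul_of_nonneg_left hkτ hC
        have hco : (1 - ρ) * ((1 - ρ) ^ k + (C * τ / ρ) * (1 - (1 - ρ) ^ k)) + C * k
            ≤ (1 - ρ) ^ (k + 1) + (C * τ / ρ) * (1 - (1 - ρ) ^ (k + 1)) := by linarith
        have hcoL := mul_le_mul_of_nonneg_right hco hℓs
        nlinarith [hr, e4, hmul, hcoL]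
    have hτfin := h2 τ le_rfl
    have hpτ : (0:ℝ) ≤ (1 - ρ) ^ τ := pow_nonneg hρ' τ
    have hD0 : (0:ℝ) ≤ C * (τ:ℝ) / ρ := by positivity
    have hcoef : (1 - ρ) ^ τ + (C * τ / ρ) * (1 - (1 - ρ) ^ τ)
        ≤ (1 - ρ) ^ τ + 2 * C * (τ:ℝ) / ρ := by
      have h2e : 2 * C * (τ:ℝ) / ρ = 2 * (C * (τ:ℝ) / ρ) := by ring
      rw [h2e]
      nlinarith
    calc ℓ ((c + 1) * τ) = ℓ (c * τ + τ) := by rw [hsτ]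
      _ ≤ ((1 - ρ) ^ τ + (C * τ / ρ) * (1 - (1 - ρ) ^ τ)) * ℓ (c * τ) := hτfin
      _ ≤ ((1 - ρ) ^ τ + 2 * C * (τ:ℝ) / ρ) * ℓ (c * τ) :=
          mul_le_mul_of_nonneg_right hcoef (hnn _)
  intro c
  induction c with
  | zero => simp
  | succ c ih =>
    calc ℓ ((c + 1) * τ) ≤ ((1 - ρ) ^ τ + 2 * C * (τ:ℝ) / ρ) * ℓ (c * τ) := key c
      _ ≤ ((1 - ρ) ^ τ + 2 * C * (τ:ℝ) / ρ) * (((1 - ρ) ^ τ + 2 * C * (τ:ℝ) / ρ) ^ c * ℓ 0) :=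
          mul_le_mul_of_nonneg_left ih hQ0
      _ = ((1 - ρ) ^ τ + 2 * C * (τ:ℝ) / ρ) ^ (c + 1) * ℓ 0 := by ring
end

section
/- Let τ ≥ 1 be an integer, ρ ∈ (0,1], D ≥ 0, M ≥ 0, and let ℓ : ℕ → [0,∞) satisfy ℓ_{t+1} ≤ (1−ρ)·ℓ_t + D·ℓ_{τ·⌊t/τ⌋} for every t ≥ 0, and ℓ_{cτ} ≤ M·ℓ_0 for every integer c ≥ 0. Then for every t ≥ 0, ℓ_t ≤ (1−ρ)^t·ℓ_0 + (DM/ρ)·ℓ_0. -/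
open Finset

theorem stmt14 (τ : ℕ) (hτ : 1 ≤ τ) (ρ D M : ℝ) (hρ0 : 0 < ρ) (hρ1 : ρ ≤ 1)
    (hD : 0 ≤ D) (hM : 0 ≤ M)
    (ℓ : ℕ → ℝ) (hnn : ∀ t, 0 ≤ ℓ t)
    (hrec : ∀ t, ℓ (t + 1) ≤ (1 - ρ) * ℓ t + D * ℓ (τ * (t / τ)))
    (hblock : ∀ c : ℕ, ℓ (c * τ) ≤ M * ℓ 0) :
    ∀ t, ℓ t ≤ (1 - ρ) ^ t * ℓ 0 + (D * M / ρ) * ℓ 0 := by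
  have h1ρ : 0 ≤ 1 - ρ := by linarith
  have key : ∀ t, ℓ t ≤ (1 - ρ) ^ t * ℓ 0 +
      D * M * ℓ 0 * ∑ i ∈ range t, (1 - ρ) ^ i := by
    intro t
    induction t with
    | zero => simp
    | succ t ih =>
      have hb : ℓ (τ * (t / τ)) ≤ M * ℓ 0 := by
        have := hblock (t / τ); rwa [Nat.mul_comm] at this
      have := hrec t
      have h2 : (1 - ρ) * ℓ t ≤ (1 - ρ) * ((1 - ρ) ^ t * ℓ 0 +
          D * M * ℓ 0 * ∑ i ∈ range t, (1 - ρ) ^ i) :=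
        mul_le_mul_of_nonneg_left ih h1ρ
      have h3 : D * ℓ (τ * (t / τ)) ≤ D * (M * ℓ 0) :=
        mul_le_mul_of_nonneg_left hb hD
      rw [geom_sum_succ]
      calc ℓ (t + 1) ≤ (1 - ρ) * ℓ t + D * ℓ (τ * (t / τ)) := this
        _ ≤ (1 - ρ) * ((1 - ρ) ^ t * ℓ 0 +
            D * M * ℓ 0 * ∑ i ∈ range t, (1 - ρ) ^ i) + D * (M * ℓ 0) := by
              linarith
        _ = (1 - ρ) ^ (t + 1) * ℓ 0 +
            D * M * ℓ 0 * ((1 - ρ) * ∑ i ∈ range t, (1 - ρ) ^ i + 1) := by ring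
  intro t
  have hsum : ∑ i ∈ range t, (1 - ρ) ^ i ≤ 1 / ρ := by
    have heq : ∑ i ∈ range t, (1 - ρ) ^ i = (1 - (1 - ρ) ^ t) / ρ := by
      rw [geom_sum_eq (by intro h; simp at h; linarith : (1 - ρ) ≠ 1)]
      rw [div_eq_div_iff (by linarith) (by linarith : (0:ℝ) < ρ).ne' ] <;> try ring_nf
      all_goals linarith
    rw [heq, div_le_div_iff₀ hρ0 hρ0]
    have : 0 ≤ (1 - ρ) ^ t := pow_nonneg h1ρ t
    nlinarith
  have h4 : D * M * ℓ 0 * ∑ i ∈ range t, (1 - ρ) ^ i ≤ D * M * ℓ 0 * (1 / ρ) :=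
    mul_le_mul_of_nonneg_left hsum (mul_nonneg (mul_nonneg hD hM) (hnn 0))
  have := key t
  have : D * M / ρ * ℓ 0 = D * M * ℓ 0 * (1 / ρ) := by ring
  linarith [key t, h4]
end
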